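/- arXiv:math/0606584 — 7 statements merged into one kernel-verified Lean document; each statement's English description precedes it below -/
import Mathlib

section
/- For every n ≥ 1, the random variable max_{0≤k≤n} |I_out_k − k·I_lsb| has the same distribution as σ_u √n · max_{1≤k≤n} |B_{k/n}|, where B is a Brownian bridge. -/
open MeasureTheory ProbabilityTheory Filter
open scoped NNReal ENNReal Topology

noncomputable section

/-- A standard Brownian motion (Wiener process): `W_0 = 0` a.s., a.s. continuous sample
paths, independent increments, and `W_t - W_s ~ N(0, t-s)` for `0 ≤ s ≤ t`. -/
structure IsBrownianMotion {Ω : Type*} [MeasurableSpace Ω] (P : Measure Ω)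
    (W : ℝ → Ω → ℝ) : Prop where
  meas : ∀ t : ℝ, Measurable (W t)
  init : ∀ᵐ ω ∂P, W 0 ω = 0
  cont : ∀ᵐ ω ∂P, Continuous fun t => W t ω
  indep : ∀ (n : ℕ) (t : ℕ → ℝ), Monotone t → (∀ i, 0 ≤ t i) →
    iIndepFun
      (fun i : Fin n => fun ω => W (t (i + 1)) ω - W (t i) ω) P
  law : ∀ s t : ℝ, 0 ≤ s → s ≤ t →
    Measure.map (fun ω => W t ω - W s ω) P = gaussianReal 0 (Real.toNNReal (t - s))

/-- An i.i.d. family of Gaussian random variables with mean `μ` and variance `v`. -/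
def IsIIDGaussian {Ω : Type*} [MeasurableSpace Ω] (P : Measure Ω) (X : ℕ → Ω → ℝ)
    (μ : ℝ) (v : ℝ≥0) : Prop :=
  iIndepFun X P ∧ ∀ j, Measure.map (X j) P = gaussianReal μ v

namespace ThermoAux

variable {Ω : Type*} [MeasurableSpace Ω] {P : Measure Ω}

lemma aemeasurable_of_map_eq_gaussianReal {f : Ω → ℝ} {μ : ℝ} {v : ℝ≥0}
    (h : Measure.map f P = gaussianReal μ v) : AEMeasurable f P := by
  by_contra hf
  rw [Measure.map_of_not_aemeasurable hf] at h
  have h1 : (0 : Measure ℝ) Set.univ = (gaussianReal μ v) Set.univ := by rw [h]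
  simp [measure_univ] at h1

lemma sum_ite_lt (n k : ℕ) (hk : k ≤ n) (a : ℕ → ℝ) :
    (∑ j : Fin n, if (j : ℕ) < k then a (j : ℕ) else 0) = ∑ j ∈ Finset.range k, a j := by
  rw [Fin.sum_univ_eq_sum_range (fun j => if j < k then a j else 0) n, ← Finset.sum_filter]
  congr 1
  ext j
  simp only [Finset.mem_filter, Finset.mem_range]
  omega

lemma sup'_const_mul {ι : Type*} {s : Finset ι} (hs : s.Nonempty) (f : ι → ℝ) {c : ℝ}
    (hc : 0 ≤ c) :
    s.sup' hs (fun i => c * f i) = c * s.sup' hs f := by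
  apply le_antisymm
  · exact Finset.sup'_le _ _ fun i hi => mul_le_mul_of_nonneg_left (Finset.le_sup' f hi) hc
  · obtain ⟨i, hi, he⟩ := Finset.exists_mem_eq_sup' hs f
    rw [he]
    exact Finset.le_sup' (fun i => c * f i) hi

/-- The partial-sum functional. -/
def Ssum (n k : ℕ) (x : Fin n → ℝ) : ℝ := ∑ j : Fin n, if (j : ℕ) < k then x j else 0

/-- The max-of-centered-partial-sums functional. -/
def gfun (n : ℕ) (x : Fin n → ℝ) : ℝ :=
  (Finset.range (n + 1)).sup' (by simp) fun k => |Ssum n k x - (k : ℝ) / n * Ssum n n x|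

lemma measurable_Ssum (n k : ℕ) : Measurable (Ssum n k) := by
  unfold Ssum
  apply Finset.measurable_sum
  intro j _
  by_cases h : (j : ℕ) < k
  · simpa [h] using measurable_pi_apply j
  · simp [h]

lemma measurable_gfun (n : ℕ) : Measurable (gfun n) := by
  unfold gfun
  have h1 : (fun x : Fin n → ℝ =>
        (Finset.range (n + 1)).sup' (by simp) fun k => |Ssum n k x - (k : ℝ) / n * Ssum n n x|)
      = (Finset.range (n + 1)).sup' (by simp)
        (fun k (x : Fin n → ℝ) => |Ssum n k x - (k : ℝ) / n * Ssum n n x|) := by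
    funext x
    rw [Finset.sup'_apply]
  rw [h1]
  exact Finset.measurable_sup' _ fun k _ =>
    ((measurable_Ssum n k).sub ((measurable_Ssum n n).const_mul ((k : ℝ) / n))).abs

lemma aemeasurable_pi {κ : Type*} [Countable κ] (f : κ → Ω → ℝ)
    (hf : ∀ i, AEMeasurable (f i) P) : AEMeasurable (fun ω i => f i ω) P := by
  refine ⟨fun ω i => (hf i).mk _ ω, measurable_pi_lambda _ fun i => (hf i).measurable_mk, ?_⟩
  filter_upwards [ae_all_iff.mpr fun i => (hf i).ae_eq_mk] with ω hω
  funext i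
  exact hω i

lemma prod_formula_comp_succ {f : ℕ → Ω → ℝ}
    (h : iIndepFun f P) (n : ℕ) (φ : ℝ → ℝ) (hφ : Measurable φ)
    (sets : Fin n → Set ℝ) (hsets : ∀ i, MeasurableSet (sets i)) :
    P (⋂ i : Fin n, (fun ω => φ (f ((i : ℕ) + 1) ω)) ⁻¹' sets i)
      = ∏ i : Fin n, P ((fun ω => φ (f ((i : ℕ) + 1) ω)) ⁻¹' sets i) := by
  classical
  set e : Fin n → ℕ := fun i => (i : ℕ) + 1 with he
  have hinj : Function.Injective e := by
    intro i j hij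
    simp only [he] at hij
    exact Fin.ext (by omega)
  set T : Finset ℕ := Finset.image e Finset.univ with hT
  set sets' : ℕ → Set ℝ := fun m =>
    if hm : 0 < m ∧ m - 1 < n then φ ⁻¹' sets ⟨m - 1, hm.2⟩ else Set.univ with hsets'
  have hkey : ∀ i : Fin n, sets' (e i) = φ ⁻¹' sets i := by
    intro i
    have hm : 0 < e i ∧ e i - 1 < n := ⟨Nat.succ_pos _, by simp [he, i.isLt]⟩
    rw [hsets']
    simp only
    rw [dif_pos hm]
    have hei : (⟨e i - 1, hm.2⟩ : Fin n) = i := Fin.ext (by simp [he])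
    rw [hei]
  have hmeas' : ∀ m, MeasurableSet (sets' m) := by
    intro m
    rw [hsets']
    dsimp only
    split_ifs with hm
    · exact hφ (hsets _)
    · exact MeasurableSet.univ
  have h1 := h.measure_inter_preimage_eq_mul T (sets := sets') (fun m _ => hmeas' m)
  have h2 : (⋂ m ∈ T, f m ⁻¹' sets' m)
      = ⋂ i : Fin n, (fun ω => φ (f ((i : ℕ) + 1) ω)) ⁻¹' sets i := by
    ext ω
    simp only [Set.mem_iInter, Set.mem_preimage, hT, Finset.mem_image, Finset.mem_univ,
      true_and]
    constructor
    · intro hm i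
      have h3 := hm (e i) ⟨i, rfl⟩
      rw [hkey i] at h3
      exact h3
    · intro hi m hm
      obtain ⟨i, rfl⟩ := hm
      rw [hkey i]
      exact hi i
  have h3 : (∏ m ∈ T, P (f m ⁻¹' sets' m))
      = ∏ i : Fin n, P ((fun ω => φ (f ((i : ℕ) + 1) ω)) ⁻¹' sets i) := by
    rw [hT, Finset.prod_image (fun i _ j _ hij => hinj hij)]
    refine Finset.prod_congr rfl fun i _ => ?_
    rw [hkey i]
    rfl
  rw [← h2, h1, h3]

lemma map_eq_pi {κ : Type*} [Fintype κ] (f : κ → Ω → ℝ) (hmeas : ∀ i, AEMeasurable (f i) P)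
    (marg : κ → Measure ℝ) [∀ i, IsProbabilityMeasure (marg i)]
    (hmarg : ∀ i, Measure.map (f i) P = marg i)
    (hprod : ∀ sets : κ → Set ℝ, (∀ i, MeasurableSet (sets i)) →
      P (⋂ i, f i ⁻¹' sets i) = ∏ i, P (f i ⁻¹' sets i)) :
    Measure.map (fun ω i => f i ω) P = Measure.pi marg := by
  refine (Measure.pi_eq fun s hs => ?_).symm
  rw [Measure.map_apply_of_aemeasurable (ThermoAux.aemeasurable_pi _ hmeas)
    (MeasurableSet.univ_pi hs)]
  have hpre : (fun ω i => f i ω) ⁻¹' Set.pi Set.univ s = ⋂ i, f i ⁻¹' s i := by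
    ext ω; simp [Set.mem_pi]
  rw [hpre, hprod s hs]
  exact Finset.prod_congr rfl fun i _ => by
    rw [← hmarg i, Measure.map_apply_of_aemeasurable (hmeas i) (hs i)]

end ThermoAux

/-- **Proposition (thermometer coding).** For every `n ≥ 1`,
`max_{0≤k≤n} |I_out_k − k·I_lsb|` has the same distribution as
`σ_u √n · max_{1≤k≤n} |B_{k/n}|`, where `B` is a Brownian bridge. -/
theorem thermometer_max_eq_distrib_brownianBridge
    {Ω Ω' : Type*} [MeasurableSpace Ω] [MeasurableSpace Ω']
    (P : Measure Ω) [IsProbabilityMeasure P] (P' : Measure Ω') [IsProbabilityMeasure P']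
    (n : ℕ) (hn : 1 ≤ n)
    (Ibar su : ℝ) (hsu : 0 < su)
    -- the unit currents: i.i.d. normal with mean `Ibar` and variance `su²`
    (Iu : ℕ → Ω → ℝ) (hiid : IsIIDGaussian P Iu Ibar ⟨su ^ 2, sq_nonneg su⟩)
    -- the Brownian bridge `B_t = W_t - t·W_1`
    (W : ℝ → Ω' → ℝ) (hW : IsBrownianMotion P' W)
    (B : ℝ → Ω' → ℝ) (hB : ∀ t ω, B t ω = W t ω - t * W 1 ω)
    -- thermometer DAC output `I_out_k = ∑_{j=1}^k I_u_j`
    (Iout : ℕ → Ω → ℝ) (hIout : ∀ k ω, Iout k ω = ∑ j ∈ Finset.range k, Iu (j + 1) ω)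
    -- `I_lsb = I_out_n / n`
    (Ilsb : Ω → ℝ) (hIlsb : ∀ ω, Ilsb ω = Iout n ω / n) :
    Measure.map
        (fun ω => (Finset.range (n + 1)).sup' (by simp) fun k => |Iout k ω - k * Ilsb ω|) P
      = Measure.map
        (fun ω => su * Real.sqrt n *
          ((Finset.Icc 1 n).sup' (Finset.nonempty_Icc.mpr hn) fun k => |B (k / n) ω|)) P' := by
  classical
  obtain ⟨hIndep, hmap⟩ := hiid
  have hn0 : (n : ℝ) ≠ 0 := Nat.cast_ne_zero.mpr (by omega)
  have hnpos : (0 : ℝ) < n := by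
    have : (0 : ℕ) < n := by omega
    exact_mod_cast this
  set v : ℝ≥0 := ⟨su ^ 2, sq_nonneg su⟩ with hv
  set c : ℝ := su * Real.sqrt n with hcdef
  have hc : 0 ≤ c := mul_nonneg hsu.le (Real.sqrt_nonneg _)
  set FI : Fin n → Ω → ℝ := fun i ω => Iu ((i : ℕ) + 1) ω - Ibar with hFI
  set FW : Fin n → Ω' → ℝ :=
    fun i ω => c * (W ((((i : ℕ) + 1 : ℕ) : ℝ) / n) ω - W (((i : ℕ) : ℝ) / n) ω) with hFW
  have haeIu : ∀ j, AEMeasurable (Iu j) P := fun j =>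
    ThermoAux.aemeasurable_of_map_eq_gaussianReal (hmap j)
  have haeFI : ∀ i, AEMeasurable (FI i) P := fun i => (haeIu _).sub aemeasurable_const
  have hmeasFW : ∀ i, Measurable (FW i) := fun i => ((hW.meas _).sub (hW.meas _)).const_mul c
  -- marginals of FI
  have hmargFI : ∀ i : Fin n, Measure.map (FI i) P = gaussianReal 0 v := by
    intro i
    have hcomp : FI i = (fun x => x + (-Ibar)) ∘ Iu ((i : ℕ) + 1) := by
      funext ω; simp [hFI, sub_eq_add_neg]
    rw [hcomp, ← AEMeasurable.map_map_of_aemeasurable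
      (measurable_add_const (-Ibar)).aemeasurable (haeIu _), hmap,
      gaussianReal_map_add_const]
    simp
  -- marginals of FW
  have h1n : ∀ i : Fin n, (((i : ℕ) + 1 : ℕ) : ℝ) / n - ((i : ℕ) : ℝ) / n = 1 / n := by
    intro i; push_cast; ring
  set vc : ℝ≥0 := ⟨c ^ 2, sq_nonneg c⟩ with hvc
  have hvar : vc * Real.toNNReal (1 / n) = v := by
    apply NNReal.coe_injective
    rw [NNReal.coe_mul, Real.coe_toNNReal _ (by positivity : (0:ℝ) ≤ 1 / n)]
    show c ^ 2 * (1 / n) = su ^ 2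
    rw [hcdef, mul_pow, Real.sq_sqrt hnpos.le]
    field_simp
  have hmargFW : ∀ i : Fin n, Measure.map (FW i) P' = gaussianReal 0 v := by
    intro i
    have h0 : (0 : ℝ) ≤ ((i : ℕ) : ℝ) / n := by positivity
    have hle : ((i : ℕ) : ℝ) / n ≤ (((i : ℕ) + 1 : ℕ) : ℝ) / n :=
      (div_le_div_iff_of_pos_right hnpos).mpr (by exact_mod_cast Nat.le_succ _)
    have hlaw := hW.law _ _ h0 hle
    have hcomp : FW i = (fun x => c * x) ∘
        (fun ω => W ((((i : ℕ) + 1 : ℕ) : ℝ) / n) ω - W (((i : ℕ) : ℝ) / n) ω) := rfl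
    rw [hcomp, ← AEMeasurable.map_map_of_aemeasurable (measurable_const_mul c).aemeasurable
      (f := fun ω => W ((((i : ℕ) + 1 : ℕ) : ℝ) / n) ω - W (((i : ℕ) : ℝ) / n) ω)
      ((hW.meas _).sub (hW.meas _)).aemeasurable, hlaw, h1n i,
      gaussianReal_map_const_mul, mul_zero]
    exact congrArg (gaussianReal 0) hvar
  -- product formula for FI
  have hprodFI : ∀ sets : Fin n → Set ℝ, (∀ i, MeasurableSet (sets i)) →
      P (⋂ i, FI i ⁻¹' sets i) = ∏ i, P (FI i ⁻¹' sets i) := by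
    intro sets hsets
    exact ThermoAux.prod_formula_comp_succ hIndep n (fun x => x - Ibar)
      (measurable_id.sub_const _) sets hsets
  -- product formula for FW
  have hmono : Monotone (fun m : ℕ => (m : ℝ) / n) := fun a b hab =>
    (div_le_div_iff_of_pos_right hnpos).mpr (by exact_mod_cast hab)
  have hindW0 := hW.indep n (fun m : ℕ => (m : ℝ) / n) hmono (fun m => by positivity)
  have hindW := hindW0.comp (fun _ : Fin n => fun x : ℝ => c * x)
    (fun _ => measurable_const_mul c)
  have hprodFW : ∀ sets : Fin n → Set ℝ, (∀ i, MeasurableSet (sets i)) →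
      P' (⋂ i, FW i ⁻¹' sets i) = ∏ i, P' (FW i ⁻¹' sets i) := by
    intro sets hsets
    have h1 := hindW.measure_inter_preimage_eq_mul Finset.univ (sets := sets)
      (fun i _ => hsets i)
    simpa [Function.comp_def, hFW] using h1
  -- identification of the vector laws
  have hmapFI : Measure.map (fun ω i => FI i ω) P
      = Measure.pi (fun _ : Fin n => gaussianReal 0 v) :=
    ThermoAux.map_eq_pi _ haeFI _ (fun i => hmargFI i) hprodFI
  have hmapFW : Measure.map (fun ω i => FW i ω) P'
      = Measure.pi (fun _ : Fin n => gaussianReal 0 v) :=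
    ThermoAux.map_eq_pi _ (fun i => (hmeasFW i).aemeasurable) _ (fun i => hmargFW i) hprodFW
  -- LHS functional identity (pointwise)
  have hLfun : (fun ω => (Finset.range (n + 1)).sup' (by simp) fun k => |Iout k ω - k * Ilsb ω|)
      = fun ω => ThermoAux.gfun n (fun i => FI i ω) := by
    funext ω
    unfold ThermoAux.gfun
    refine Finset.sup'_congr _ rfl fun k hk => ?_
    have hk' : k ≤ n := by
      have := Finset.mem_range.mp hk; omega
    have hS : ∀ m, m ≤ n → ThermoAux.Ssum n m (fun i => FI i ω) = Iout m ω - m * Ibar := by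
      intro m hm
      unfold ThermoAux.Ssum
      simp only [hFI]
      rw [ThermoAux.sum_ite_lt n m hm (fun j => Iu (j + 1) ω - Ibar),
        Finset.sum_sub_distrib, Finset.sum_const, Finset.card_range, hIout]
      simp [nsmul_eq_mul]
    rw [hS k hk', hS n le_rfl, hIlsb]
    congr 1
    field_simp
    ring
  -- RHS functional identity (a.e.)
  have hRfun : (fun ω => ThermoAux.gfun n (fun i => FW i ω))
      =ᵐ[P'] fun ω => c *
        ((Finset.Icc 1 n).sup' (Finset.nonempty_Icc.mpr hn) fun k => |B (k / n) ω|) := by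
    filter_upwards [hW.init] with ω hω0
    have hS : ∀ m, m ≤ n →
        ThermoAux.Ssum n m (fun i => FW i ω) = c * W ((m : ℝ) / n) ω := by
      intro m hm
      unfold ThermoAux.Ssum
      simp only [hFW]
      rw [ThermoAux.sum_ite_lt n m hm
        (fun j => c * (W (((j + 1 : ℕ) : ℝ) / n) ω - W ((j : ℝ) / n) ω)),
        ← Finset.mul_sum]
      congr 1
      rw [Finset.sum_range_sub (fun m : ℕ => W ((m : ℝ) / n) ω) m]
      simp [hω0]
    have hterm : ∀ k ∈ Finset.range (n + 1),
        |ThermoAux.Ssum n k (fun i => FW i ω)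
          - (k : ℝ) / n * ThermoAux.Ssum n n (fun i => FW i ω)|
        = c * |B ((k : ℝ) / n) ω| := by
      intro k hk
      have hk' : k ≤ n := by
        have := Finset.mem_range.mp hk; omega
      rw [hS k hk', hS n le_rfl, div_self hn0, hB]
      have h4 : c * W ((k : ℝ) / n) ω - (k : ℝ) / n * (c * W 1 ω)
          = c * (W ((k : ℝ) / n) ω - (k : ℝ) / n * W 1 ω) := by ring
      rw [h4, abs_mul, abs_of_nonneg hc]
    unfold ThermoAux.gfun
    rw [Finset.sup'_congr (by simp) rfl hterm,
      ThermoAux.sup'_const_mul _ _ hc]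
    congr 1
    have hins : Finset.range (n + 1) = insert 0 (Finset.Icc 1 n) := by
      ext m; simp; omega
    have hIccne : (Finset.Icc 1 n).Nonempty := Finset.nonempty_Icc.mpr hn
    rw [Finset.sup'_congr (by simp) hins (fun _ _ => rfl), Finset.sup'_insert (H := hIccne)]
    have hB0 : |B (((0 : ℕ) : ℝ) / n) ω| = 0 := by
      simp [hB, hω0]
    rw [hB0]
    refine sup_eq_right.mpr ?_
    exact le_trans (le_of_eq rfl)
      (Finset.le_sup'_of_le _ (Finset.mem_Icc.mpr ⟨le_rfl, hn⟩) (abs_nonneg _))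
  -- put everything together
  rw [hLfun]
  calc Measure.map (fun ω => ThermoAux.gfun n (fun i => FI i ω)) P
      = Measure.map (ThermoAux.gfun n) (Measure.map (fun ω i => FI i ω) P) := by
        rw [AEMeasurable.map_map_of_aemeasurable (ThermoAux.measurable_gfun n).aemeasurable
          (ThermoAux.aemeasurable_pi _ haeFI)]
        rfl
    _ = Measure.map (ThermoAux.gfun n) (Measure.map (fun ω i => FW i ω) P') := by
        rw [hmapFI, hmapFW]
    _ = Measure.map (fun ω => ThermoAux.gfun n (fun i => FW i ω)) P' := by
        rw [AEMeasurable.map_map_of_aemeasurable (ThermoAux.measurable_gfun n).aemeasurable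
          (ThermoAux.aemeasurable_pi _ (fun i => (hmeasFW i).aemeasurable))]
        rfl
    _ = _ := Measure.map_congr hRfun
end
end

section
/- There exists a constant c > 0 such that for every integer n ≥ 2, E[ | max_{1≤k≤n} |B_{k/n}| − max_{t∈[0,1]} |B_t| | ] ≤ c √((log n)/n), where B is a Brownian bridge and log denotes the natural logarithm. In particular max_{1≤k≤n} |B_{k/n}| converges to max_{t∈[0,1]} |B_t| in L¹ as n → ∞. -/
open MeasureTheory ProbabilityTheory Filter
open scoped NNReal ENNReal Topology

noncomputable section

set_option maxHeartbeats 1000000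

namespace BBAux


/-- Maximum of level-`j` dyadic increments of `f` over `[0,1]`. -/
def lvl (f : ℝ → ℝ) (j : ℕ) : ℝ :=
  (Finset.range (2 ^ j)).sup' (Finset.nonempty_range_iff.mpr (by positivity))
    fun i => |f ((i + 1) / 2 ^ j) - f (i / 2 ^ j)|

lemma le_lvl (f : ℝ → ℝ) (j i : ℕ) (hi : i < 2 ^ j) :
    |f ((i + 1) / 2 ^ j) - f (i / 2 ^ j)| ≤ lvl f j :=
  Finset.le_sup' (fun i : ℕ => |f ((i + 1) / 2 ^ j) - f (i / 2 ^ j)|)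
    (Finset.mem_range.mpr hi)

lemma lvl_nonneg (f : ℝ → ℝ) (j : ℕ) : 0 ≤ lvl f j :=
  le_trans (abs_nonneg _) (le_lvl f j 0 (by positivity))

/-- Dyadic approximation of `t` at level `j`. -/
def dy (j : ℕ) (t : ℝ) : ℝ := (⌊t * 2 ^ j⌋₊ : ℝ) / 2 ^ j

lemma dy_le {t : ℝ} (ht : 0 ≤ t) (j : ℕ) : dy j t ≤ t := by
  rw [dy, div_le_iff₀ (by positivity)]
  exact Nat.floor_le (by positivity)

lemma lt_dy_add (t : ℝ) (j : ℕ) : t < dy j t + ((2:ℝ) ^ j)⁻¹ := by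
  have h : t * 2 ^ j < ⌊t * 2 ^ j⌋₊ + 1 := Nat.lt_floor_add_one _
  rw [dy]
  rw [← lt_div_iff₀ (by positivity : (0:ℝ) < 2 ^ j)] at h
  calc t < (↑⌊t * 2 ^ j⌋₊ + 1) / 2 ^ j := h
    _ = ↑⌊t * 2 ^ j⌋₊ / 2 ^ j + ((2:ℝ) ^ j)⁻¹ := by ring

lemma dy_tendsto {t : ℝ} (ht : 0 ≤ t) : Tendsto (fun j => dy j t) atTop (𝓝 t) := by
  have h1 : ∀ j, t - ((2:ℝ) ^ j)⁻¹ ≤ dy j t := fun j => by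
    have := lt_dy_add t j; linarith
  have h0 : Tendsto (fun j : ℕ => ((2:ℝ) ^ j)⁻¹) atTop (𝓝 0) := by
    simpa using tendsto_pow_atTop_nhds_zero_of_lt_one (by norm_num : (0:ℝ) ≤ 2⁻¹)
      (by norm_num : (2:ℝ)⁻¹ < 1) |>.congr (fun j => by rw [inv_pow])
  have h2 : Tendsto (fun j : ℕ => t - ((2:ℝ) ^ j)⁻¹) atTop (𝓝 t) := by
    simpa using tendsto_const_nhds.sub h0
  exact tendsto_of_tendsto_of_tendsto_of_le_of_le h2 tendsto_const_nhds h1 (fun j => dy_le ht j)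

lemma floor_two_mul (x : ℝ) (hx : 0 ≤ x) :
    ⌊2 * x⌋₊ = 2 * ⌊x⌋₊ ∨ ⌊2 * x⌋₊ = 2 * ⌊x⌋₊ + 1 := by
  have h1 : 2 * ⌊x⌋₊ ≤ ⌊2 * x⌋₊ := by
    refine Nat.le_floor ?_
    push_cast
    nlinarith [Nat.floor_le hx]
  have h2 : ⌊2 * x⌋₊ < 2 * ⌊x⌋₊ + 2 := by
    rw [Nat.floor_lt (by positivity)]
    push_cast
    nlinarith [Nat.lt_floor_add_one x]
  omega

lemma chain_step (f : ℝ → ℝ) {t : ℝ} (ht0 : 0 ≤ t) (ht1 : t ≤ 1) (j : ℕ) :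
    |f (dy (j + 1) t) - f (dy j t)| ≤ lvl f (j + 1) := by
  have hx : (0:ℝ) ≤ t * 2 ^ j := by positivity
  have hkey : t * 2 ^ (j + 1) = 2 * (t * 2 ^ j) := by ring
  rcases floor_two_mul (t * 2 ^ j) hx with h | h
  · have : dy (j + 1) t = dy j t := by
      rw [dy, dy, hkey, h]
      push_cast
      ring
    rw [this, sub_self, abs_zero]
    exact lvl_nonneg f (j + 1)
  · -- increment case
    set i : ℕ := 2 * ⌊t * 2 ^ j⌋₊ with hi
    have hle : ⌊2 * (t * 2 ^ j)⌋₊ ≤ 2 ^ (j + 1) := by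
      have hb : 2 * (t * 2 ^ j) ≤ ((2 ^ (j + 1) : ℕ) : ℝ) := by
        push_cast
        rw [pow_succ]
        nlinarith [pow_pos (by norm_num : (0:ℝ) < 2) j]
      have := Nat.floor_le_floor hb
      rwa [Nat.floor_natCast] at this
    have hilt : i < 2 ^ (j + 1) := by omega
    have e1 : dy (j + 1) t = ((i:ℝ) + 1) / 2 ^ (j + 1) := by
      rw [dy, hkey, h]; push_cast; ring
    have e2 : dy j t = (i:ℝ) / 2 ^ (j + 1) := by
      rw [dy, hi]; push_cast; ring
    rw [e1, e2]
    exact le_lvl f (j + 1) i hilt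

lemma chain_teles (f : ℝ → ℝ) {t : ℝ} (ht0 : 0 ≤ t) (ht1 : t ≤ 1) (m J : ℕ) :
    |f (dy (m + J) t) - f (dy m t)| ≤ ∑ j ∈ Finset.range J, lvl f (m + j + 1) := by
  induction J with
  | zero => simp
  | succ J ih =>
      have h1 := chain_step f ht0 ht1 (m + J)
      calc |f (dy (m + (J+1)) t) - f (dy m t)|
          ≤ |f (dy (m + J + 1) t) - f (dy (m + J) t)| + |f (dy (m + J) t) - f (dy m t)| := by
            rw [show m + (J + 1) = m + J + 1 from rfl]
            exact abs_sub_le _ _ _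
        _ ≤ lvl f (m + J + 1) + ∑ j ∈ Finset.range J, lvl f (m + j + 1) := add_le_add h1 ih
        _ = ∑ j ∈ Finset.range (J+1), lvl f (m + j + 1) := by
            rw [Finset.sum_range_succ]; ring

lemma chain_near (f : ℝ → ℝ) {s t : ℝ} (hs0 : 0 ≤ s) (hst : s ≤ t) (ht1 : t ≤ 1) (m : ℕ)
    (hd : t ≤ s + ((2:ℝ) ^ m)⁻¹) :
    |f (dy m t) - f (dy m s)| ≤ lvl f m := by
  have h1 : ⌊s * 2 ^ m⌋₊ ≤ ⌊t * 2 ^ m⌋₊ :=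
    Nat.floor_le_floor (by nlinarith [pow_pos (by norm_num : (0:ℝ) < 2) m])
  have ht0 : 0 ≤ t := hs0.trans hst
  have h2 : ⌊t * 2 ^ m⌋₊ < ⌊s * 2 ^ m⌋₊ + 2 := by
    rw [Nat.floor_lt (by positivity)]
    push_cast
    have hf := Nat.lt_floor_add_one (s * 2 ^ m)
    have hpow : (0:ℝ) < 2 ^ m := by positivity
    have hq : (2:ℝ) ^ m * ((2:ℝ) ^ m)⁻¹ = 1 := mul_inv_cancel₀ (ne_of_gt hpow)
    nlinarith [mul_le_mul_of_nonneg_right hd hpow.le]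
  rcases (by omega : ⌊t * 2 ^ m⌋₊ = ⌊s * 2 ^ m⌋₊ ∨ ⌊t * 2 ^ m⌋₊ = ⌊s * 2 ^ m⌋₊ + 1) with h | h
  · rw [dy, dy, h, sub_self, abs_zero]; exact lvl_nonneg f m
  · set i : ℕ := ⌊s * 2 ^ m⌋₊ with hi
    have hilt : i < 2 ^ m := by
      have : ⌊t * 2 ^ m⌋₊ ≤ 2 ^ m := by
        refine Nat.floor_le_of_le ?_
        push_cast
        nlinarith [pow_pos (by norm_num : (0:ℝ) < 2) m]
      omega
    have e1 : dy m t = ((i:ℝ) + 1) / 2 ^ m := by rw [dy, h]; push_cast; ring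
    have e2 : dy m s = (i:ℝ) / 2 ^ m := by rw [dy]
    rw [e1, e2]
    exact le_lvl f m i hilt



lemma chain_bound_aux (f : ℝ → ℝ) (hf : Continuous f) {s t : ℝ} (hs0 : 0 ≤ s) (hst : s ≤ t)
    (ht1 : t ≤ 1) (m : ℕ) (hd : t ≤ s + ((2:ℝ) ^ m)⁻¹)
    (hsum : Summable fun j => lvl f (m + j)) :
    |f t - f s| ≤ 2 * ∑' j, lvl f (m + j) := by
  have ht0 : 0 ≤ t := hs0.trans hst
  have hs1 : s ≤ 1 := hst.trans ht1
  have hsum' : Summable fun j => lvl f (m + (j + 1)) := (summable_nat_add_iff (f := fun j => lvl f (m + j)) 1).mpr hsum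
  set S' : ℝ := ∑' j, lvl f (m + (j + 1)) with hS'
  -- for every J, a bound
  have hJ : ∀ J : ℕ, |f t - f s| ≤
      |f t - f (dy (m + J) t)| + (∑ j ∈ Finset.range J, lvl f (m + j + 1)) + lvl f m
        + (∑ j ∈ Finset.range J, lvl f (m + j + 1)) + |f (dy (m + J) s) - f s| := by
    intro J
    have h1 := chain_teles f ht0 ht1 m J
    have h2 := chain_teles f hs0 hs1 m J
    have h3 := chain_near f hs0 hst ht1 m hd
    calc |f t - f s|
        ≤ |f t - f (dy (m + J) t)| + |f (dy (m + J) t) - f (dy m t)| + |f (dy m t) - f (dy m s)|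
          + |f (dy m s) - f (dy (m + J) s)| + |f (dy (m + J) s) - f s| := by
          have := abs_sub_le (f t) (f (dy (m + J) t)) (f s)
          have := abs_sub_le (f (dy (m + J) t)) (f (dy m t)) (f s)
          have := abs_sub_le (f (dy m t)) (f (dy m s)) (f s)
          have := abs_sub_le (f (dy m s)) (f (dy (m + J) s)) (f s)
          linarith
      _ ≤ _ := by
          rw [abs_sub_comm (f (dy m s))]
          linarith
  -- limits
  have htend : ∀ {u : ℝ}, 0 ≤ u → u ≤ 1 →
      Tendsto (fun J => |f u - f (dy (m + J) u)|) atTop (𝓝 0) := by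
    intro u hu0 hu1
    have h1 : Tendsto (fun J : ℕ => dy (m + J) u) atTop (𝓝 u) :=
      (dy_tendsto hu0).comp ((tendsto_add_atTop_nat m).congr (fun n => add_comm n m))
    have h2 : Tendsto (fun J : ℕ => f (dy (m + J) u)) atTop (𝓝 (f u)) :=
      (hf.tendsto u).comp h1
    have h3 := ((tendsto_const_nhds (x := f u) (f := atTop)).sub h2).abs
    simpa using h3
  have hsumtend : Tendsto (fun J => ∑ j ∈ Finset.range J, lvl f (m + j + 1)) atTop (𝓝 S') := by
    have := hsum'.hasSum.tendsto_sum_nat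
    rw [hS']
    simpa [show ∀ j, m + (j + 1) = m + j + 1 from fun j => by omega] using this
  have hlim : Tendsto (fun J => |f t - f (dy (m + J) t)|
      + (∑ j ∈ Finset.range J, lvl f (m + j + 1)) + lvl f m
      + (∑ j ∈ Finset.range J, lvl f (m + j + 1)) + |f (dy (m + J) s) - f s|) atTop
      (𝓝 (0 + S' + lvl f m + S' + 0)) := by
    have hlast : Tendsto (fun J => |f (dy (m + J) s) - f s|) atTop (𝓝 0) := by
      simpa [abs_sub_comm] using htend hs0 hs1
    exact ((((htend ht0 ht1).add hsumtend).add tendsto_const_nhds).add hsumtend).add hlast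
  have hle : |f t - f s| ≤ 0 + S' + lvl f m + S' + 0 := ge_of_tendsto hlim (.of_forall hJ)
  have hsplit : ∑' j, lvl f (m + j) = lvl f m + S' := by
    have h := Summable.tsum_eq_zero_add hsum
    rw [hS']
    simpa using h
  have hS'nonneg : 0 ≤ S' := tsum_nonneg fun j => lvl_nonneg f _
  have := lvl_nonneg f m
  rw [hsplit]
  linarith

lemma chain_bound (f : ℝ → ℝ) (hf : Continuous f) {s t : ℝ} (hs : s ∈ Set.Icc (0:ℝ) 1)
    (ht : t ∈ Set.Icc (0:ℝ) 1) (m : ℕ) (hd : |t - s| ≤ ((2:ℝ) ^ m)⁻¹)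
    (hsum : Summable fun j => lvl f (m + j)) :
    |f t - f s| ≤ 2 * ∑' j, lvl f (m + j) := by
  rcases le_total s t with h | h
  · exact chain_bound_aux f hf hs.1 h ht.2 m (by rw [abs_of_nonneg (by linarith)] at hd; linarith)
      hsum
  · rw [abs_sub_comm]
    exact chain_bound_aux f hf ht.1 h hs.2 m (by rw [abs_of_nonpos (by linarith)] at hd; linarith)
      hsum



lemma pdf_mul_exp (v : ℝ≥0) (hv : v ≠ 0) (c x : ℝ) :
    gaussianPDFReal 0 v x * Real.exp (c * x)
      = Real.exp (c ^ 2 * v / 2) * gaussianPDFReal (c * v) v x := by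
  have hv' : (0:ℝ) < v := lt_of_le_of_ne v.coe_nonneg (by exact_mod_cast (Ne.symm hv))
  simp only [gaussianPDFReal]
  rw [mul_assoc, ← Real.exp_add]
  rw [show Real.exp (c ^ 2 * v / 2) * ((√(2 * Real.pi * v))⁻¹ *
      Real.exp (-(x - c * v) ^ 2 / (2 * v)))
    = (√(2 * Real.pi * v))⁻¹ * (Real.exp (c ^ 2 * v / 2) *
      Real.exp (-(x - c * v) ^ 2 / (2 * v))) from by ring, ← Real.exp_add]
  congr 1
  field_simp
  ring

lemma lintegral_ofReal_pdf_mul_exp (v : ℝ≥0) (hv : v ≠ 0) (c : ℝ) :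
    ∫⁻ x : ℝ, ENNReal.ofReal (gaussianPDFReal 0 v x * Real.exp (c * x))
      = ENNReal.ofReal (Real.exp (c ^ 2 * v / 2)) := by
  simp_rw [pdf_mul_exp v hv c, ENNReal.ofReal_mul (le_of_lt (Real.exp_pos _))]
  rw [lintegral_const_mul _ ((measurable_gaussianPDFReal _ _).ennreal_ofReal),
    lintegral_gaussianPDFReal_eq_one _ hv, mul_one]

lemma lintegral_exp_abs_gaussian (v : ℝ≥0) (hv : v ≠ 0) (l : ℝ) :
    ∫⁻ x : ℝ, ENNReal.ofReal (Real.exp (l * |x|)) ∂(gaussianReal 0 v)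
      ≤ 2 * ENNReal.ofReal (Real.exp (l ^ 2 * v / 2)) := by
  rw [gaussianReal_of_var_ne_zero 0 hv]
  rw [lintegral_withDensity_eq_lintegral_mul _ (measurable_gaussianPDF 0 v)
    (by fun_prop : Measurable fun x : ℝ => ENNReal.ofReal (Real.exp (l * |x|)))]
  have hpt : ∀ x : ℝ, (gaussianPDF 0 v * fun x => ENNReal.ofReal (Real.exp (l * |x|))) x
      ≤ ENNReal.ofReal (gaussianPDFReal 0 v x * Real.exp (l * x))
        + ENNReal.ofReal (gaussianPDFReal 0 v x * Real.exp (-l * x)) := by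
    intro x
    have hnn := gaussianPDFReal_nonneg 0 v x
    simp only [Pi.mul_apply, gaussianPDF]
    rw [← ENNReal.ofReal_mul hnn, ← ENNReal.ofReal_add (by positivity) (by positivity)]
    refine ENNReal.ofReal_le_ofReal ?_
    have hexp : Real.exp (l * |x|) ≤ Real.exp (l * x) + Real.exp (-l * x) := by
      rcases abs_cases x with ⟨h, _⟩ | ⟨h, _⟩
      · rw [h]; nlinarith [Real.exp_pos (-l * x)]
      · rw [h, show l * -x = -l * x from by ring]; nlinarith [Real.exp_pos (l * x)]
    nlinarith
  calc ∫⁻ x, (gaussianPDF 0 v * fun x => ENNReal.ofReal (Real.exp (l * |x|))) x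
      ≤ ∫⁻ x, (ENNReal.ofReal (gaussianPDFReal 0 v x * Real.exp (l * x))
        + ENNReal.ofReal (gaussianPDFReal 0 v x * Real.exp (-l * x))) := lintegral_mono hpt
    _ = ENNReal.ofReal (Real.exp (l ^ 2 * v / 2)) + ENNReal.ofReal (Real.exp ((-l) ^ 2 * v / 2)) := by
        rw [lintegral_add_left (f := fun x => ENNReal.ofReal (gaussianPDFReal 0 v x * Real.exp (l * x)))
          (((measurable_gaussianPDFReal 0 v).mul
          (by fun_prop)).ennreal_ofReal), lintegral_ofReal_pdf_mul_exp v hv l,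
          lintegral_ofReal_pdf_mul_exp v hv (-l)]
    _ = 2 * ENNReal.ofReal (Real.exp (l ^ 2 * v / 2)) := by
        rw [show ((-l) ^ 2 : ℝ) = l ^ 2 from by ring, two_mul]
  
lemma lintegral_exp_abs_of_map {Ω : Type*} [MeasurableSpace Ω] (P : Measure Ω) (Z : Ω → ℝ)
    (hZ : Measurable Z) (v : ℝ≥0) (hv : v ≠ 0)
    (hmap : Measure.map Z P = gaussianReal 0 v) (l : ℝ) :
    ∫⁻ ω, ENNReal.ofReal (Real.exp (l * |Z ω|)) ∂P
      ≤ 2 * ENNReal.ofReal (Real.exp (l ^ 2 * v / 2)) := by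
  have h : ∫⁻ ω, ENNReal.ofReal (Real.exp (l * |Z ω|)) ∂P
      = ∫⁻ x, ENNReal.ofReal (Real.exp (l * |x|)) ∂(Measure.map Z P) :=
    (lintegral_map (by fun_prop : Measurable fun x : ℝ => ENNReal.ofReal (Real.exp (l * |x|)))
      hZ).symm
  rw [h, hmap]
  exact lintegral_exp_abs_gaussian v hv l



-- numeric helper facts for level j
lemma sqrt_div_mul_sqrt_mul (a p : ℝ) (ha : 0 < a) (hp : 0 < p) :
    Real.sqrt (a / p) * Real.sqrt (a * p) = a := by
  rw [← Real.sqrt_mul (by positivity)]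
  rw [show a / p * (a * p) = a ^ 2 from by field_simp]
  exact Real.sqrt_sq ha.le

lemma lintegral_lvl_le {Ω : Type*} [MeasurableSpace Ω] (P : Measure Ω) [IsProbabilityMeasure P]
    (W : ℝ → Ω → ℝ) (hmeas : ∀ t, Measurable (W t))
    (hlaw : ∀ s t : ℝ, 0 ≤ s → s ≤ t →
      Measure.map (fun ω => W t ω - W s ω) P = gaussianReal 0 (Real.toNNReal (t - s)))
    (j : ℕ) :
    ∫⁻ ω, ENNReal.ofReal (lvl (fun t => W t ω) j) ∂P
      ≤ ENNReal.ofReal (3 * Real.sqrt ((j + 1) / 2 ^ j)) := by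
  set a : ℝ := (j : ℝ) + 1 with ha_def
  set p : ℝ := (2 : ℝ) ^ j with hp_def
  have ha : 0 < a := by positivity
  have hp : 0 < p := by positivity
  set l : ℝ := Real.sqrt (a * p) with hl_def
  set tt : ℝ := 2 * Real.sqrt (a / p) with htt_def
  have hl : 0 < l := Real.sqrt_pos.mpr (by positivity)
  have hl2 : l ^ 2 = a * p := Real.sq_sqrt (by positivity)
  have hkey : Real.sqrt (a / p) * l = a := sqrt_div_mul_sqrt_mul a p ha hp
  -- the increments
  set Δ : ℕ → Ω → ℝ := fun i ω => W ((i + 1) / 2 ^ j) ω - W (i / 2 ^ j) ω with hΔ_def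
  have hΔmeas : ∀ i, Measurable (Δ i) := fun i => (hmeas _).sub (hmeas _)
  have hΔlaw : ∀ i : ℕ, Measure.map (Δ i) P = gaussianReal 0 (Real.toNNReal p⁻¹) := by
    intro i
    have h := hlaw ((i : ℝ) / 2 ^ j) (((i : ℝ) + 1) / 2 ^ j) (by positivity)
      (by gcongr; linarith)
    rw [show ((i : ℝ) + 1) / 2 ^ j - (i : ℝ) / 2 ^ j = p⁻¹ from by
      rw [hp_def]; field_simp; ring] at h
    exact h
  have hvne : Real.toNNReal p⁻¹ ≠ 0 := by
    simp only [ne_eq, Real.toNNReal_eq_zero, not_le]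
    positivity
  have hvco : ((Real.toNNReal p⁻¹ : ℝ≥0) : ℝ) = p⁻¹ := Real.coe_toNNReal _ (by positivity)
  -- pointwise bound
  have hpt : ∀ ω, lvl (fun t => W t ω) j ≤
      tt + ∑ i ∈ Finset.range (2 ^ j), (1 / l) * Real.exp (l * (|Δ i ω| - tt)) := by
    intro ω
    refine Finset.sup'_le _ _ fun i hi => ?_
    have h1 : |Δ i ω| - tt ≤ (1 / l) * Real.exp (l * (|Δ i ω| - tt)) := by
      have h2 : l * (|Δ i ω| - tt) ≤ Real.exp (l * (|Δ i ω| - tt)) := by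
        nlinarith [Real.add_one_le_exp (l * (|Δ i ω| - tt))]
      have h4 := mul_le_mul_of_nonneg_left h2 (le_of_lt (one_div_pos.mpr hl))
      calc |Δ i ω| - tt = (1 / l) * (l * (|Δ i ω| - tt)) := by field_simp
        _ ≤ _ := h4
    have h3 : ∑ i' ∈ Finset.range (2 ^ j), (1 / l) * Real.exp (l * (|Δ i' ω| - tt))
        ≥ (1 / l) * Real.exp (l * (|Δ i ω| - tt)) := by
      refine Finset.single_le_sum (f := fun i' => (1 / l) * Real.exp (l * (|Δ i' ω| - tt)))
        (fun i' _ => by positivity) hi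
    calc |(fun t => W t ω) ((i + 1) / 2 ^ j) - (fun t => W t ω) (i / 2 ^ j)|
        = |Δ i ω| := rfl
      _ ≤ tt + ((1 / l) * Real.exp (l * (|Δ i ω| - tt))) := by linarith
      _ ≤ _ := by linarith
  -- integrate
  have hint : ∫⁻ ω, ENNReal.ofReal (lvl (fun t => W t ω) j) ∂P
      ≤ ENNReal.ofReal tt + ∑ i ∈ Finset.range (2 ^ j),
        ENNReal.ofReal ((1 / l) * Real.exp (- (l * tt))) *
          (2 * ENNReal.ofReal (Real.exp (l ^ 2 * (Real.toNNReal p⁻¹ : ℝ≥0) / 2))) := by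
    have hstep1 : ∫⁻ ω, ENNReal.ofReal (lvl (fun t => W t ω) j) ∂P
        ≤ ∫⁻ ω, (ENNReal.ofReal tt + ∑ i ∈ Finset.range (2 ^ j),
          ENNReal.ofReal ((1 / l) * Real.exp (- (l * tt)) * Real.exp (l * |Δ i ω|))) ∂P := by
      refine lintegral_mono fun ω => ?_
      have := hpt ω
      calc ENNReal.ofReal (lvl (fun t => W t ω) j)
          ≤ ENNReal.ofReal (tt + ∑ i ∈ Finset.range (2 ^ j),
              (1 / l) * Real.exp (l * (|Δ i ω| - tt))) := ENNReal.ofReal_le_ofReal this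
        _ ≤ _ := by
            rw [ENNReal.ofReal_add (by positivity) (by positivity)]
            gcongr
            rw [ENNReal.ofReal_sum_of_nonneg (fun i _ => by positivity)]
            refine Finset.sum_le_sum fun i _ => ENNReal.ofReal_le_ofReal (le_of_eq ?_)
            rw [show l * (|Δ i ω| - tt) = - (l * tt) + l * |Δ i ω| from by ring, Real.exp_add]
            ring
    refine hstep1.trans ?_
    rw [lintegral_add_left (measurable_const), lintegral_const]
    simp only [measure_univ, mul_one]
    gcongr
    rw [lintegral_finset_sum _ (fun i _ => by
      exact ((measurable_const.mul ((hΔmeas i).abs.const_mul l).exp)).ennreal_ofReal)]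
    refine Finset.sum_le_sum fun i _ => ?_
    have hmul : ∀ ω, ENNReal.ofReal ((1 / l) * Real.exp (- (l * tt)) * Real.exp (l * |Δ i ω|))
        = ENNReal.ofReal ((1 / l) * Real.exp (- (l * tt))) *
          ENNReal.ofReal (Real.exp (l * |Δ i ω|)) := fun ω =>
      ENNReal.ofReal_mul (by positivity)
    simp_rw [hmul]
    rw [lintegral_const_mul _ (((hΔmeas i).abs.const_mul l).exp.ennreal_ofReal)]
    gcongr
    exact lintegral_exp_abs_of_map P (Δ i) (hΔmeas i) _ hvne (hΔlaw i) l
  refine hint.trans ?_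
  have hltt : l * tt = 2 * a := by
    rw [htt_def]
    calc l * (2 * Real.sqrt (a / p)) = 2 * (Real.sqrt (a / p) * l) := by ring
      _ = 2 * a := by rw [hkey]
  have hexp : l ^ 2 * (Real.toNNReal p⁻¹ : ℝ≥0) / 2 = a / 2 := by
    rw [hvco, hl2]; field_simp
  rw [hexp, hltt]
  -- real facts
  have h2e : (2:ℝ) ≤ Real.exp (3/2) := by nlinarith [Real.add_one_le_exp (3/2:ℝ)]
  have hE : 2 * p ≤ Real.exp (3 / 2 * a) := by
    have hc : (3 / 2 : ℝ) * a = ((j + 1 : ℕ) : ℝ) * (3 / 2) := by rw [ha_def]; push_cast; ring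
    rw [hc, Real.exp_nat_mul]
    calc 2 * p = 2 ^ (j + 1) := by rw [hp_def]; ring
      _ ≤ Real.exp (3/2) ^ (j + 1) := pow_le_pow_left₀ (by norm_num) h2e _
  have h2p : 2 * p * (Real.exp (a / 2) * Real.exp (-(2 * a))) ≤ 1 := by
    have hc : Real.exp (a / 2) * Real.exp (-(2 * a)) = Real.exp (-(3 / 2 * a)) := by
      rw [← Real.exp_add]; ring_nf
    rw [hc]
    calc 2 * p * Real.exp (-(3/2 * a)) ≤ Real.exp (3/2 * a) * Real.exp (-(3/2 * a)) :=
        mul_le_mul_of_nonneg_right hE (Real.exp_pos _).le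
      _ = 1 := by rw [← Real.exp_add]; simp
  have hinv : 1 / l ≤ Real.sqrt (a / p) := by
    have h1 : Real.sqrt (a / p) = a / l := by
      rw [eq_div_iff hl.ne']; exact hkey
    rw [h1]
    have h1a : (1:ℝ) ≤ a := by rw [ha_def]; linarith [Nat.cast_nonneg (α := ℝ) j]
    gcongr <;> first | exact hl.le | linarith
  -- per-term bound in ℝ≥0∞
  have hterm : ENNReal.ofReal (1 / l * Real.exp (-(2 * a))) *
      (2 * ENNReal.ofReal (Real.exp (a / 2)))
      ≤ ENNReal.ofReal (Real.sqrt (a / p) / p) := by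
    rw [show (2:ℝ≥0∞) = ENNReal.ofReal 2 from (ENNReal.ofReal_ofNat 2).symm,
      ← ENNReal.ofReal_mul (by norm_num), ← ENNReal.ofReal_mul (by positivity)]
    refine ENNReal.ofReal_le_ofReal ?_
    have hu : (0:ℝ) ≤ Real.exp (a / 2) * Real.exp (-(2 * a)) := by positivity
    have g1 : 2 * (Real.exp (a / 2) * Real.exp (-(2 * a))) ≤ 1 / p := by
      rw [le_div_iff₀ hp]; linarith [h2p]
    calc 1 / l * Real.exp (-(2 * a)) * (2 * Real.exp (a / 2))
        = (2 * (Real.exp (a / 2) * Real.exp (-(2 * a)))) * (1 / l) := by ring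
      _ ≤ (1 / p) * (1 / l) := mul_le_mul_of_nonneg_right g1 (by positivity)
      _ ≤ (1 / p) * Real.sqrt (a / p) := by
          have : (0:ℝ) ≤ 1 / p := by positivity
          exact mul_le_mul_of_nonneg_left hinv this
      _ = Real.sqrt (a / p) / p := by ring
  have hsum : ∑ _i ∈ Finset.range (2 ^ j), ENNReal.ofReal (Real.sqrt (a / p) / p)
      = ENNReal.ofReal (Real.sqrt (a / p)) := by
    rw [Finset.sum_const, Finset.card_range, nsmul_eq_mul]
    rw [show ((2 ^ j : ℕ) : ℝ≥0∞) = ENNReal.ofReal p from by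
      rw [hp_def, Nat.cast_pow, Nat.cast_ofNat, ENNReal.ofReal_pow (by norm_num),
        ENNReal.ofReal_ofNat]]
    rw [← ENNReal.ofReal_mul (by positivity)]
    congr 1
    field_simp
  calc ENNReal.ofReal tt + ∑ _i ∈ Finset.range (2 ^ j),
        ENNReal.ofReal (1 / l * Real.exp (-(2 * a))) * (2 * ENNReal.ofReal (Real.exp (a / 2)))
      ≤ ENNReal.ofReal tt + ∑ _i ∈ Finset.range (2 ^ j),
        ENNReal.ofReal (Real.sqrt (a / p) / p) := by
        gcongr with i hi
    _ = ENNReal.ofReal tt + ENNReal.ofReal (Real.sqrt (a / p)) := by rw [hsum]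
    _ ≤ ENNReal.ofReal (3 * Real.sqrt (a / p)) := by
        rw [← ENNReal.ofReal_add (by positivity) (by positivity)]
        refine ENNReal.ofReal_le_ofReal ?_
        rw [htt_def]
        nlinarith [Real.sqrt_nonneg (a / p)]



lemma nat_add_three_le (d : ℕ) : (d : ℝ) + 3 ≤ 4 * (289/200) ^ d := by
  induction d with
  | zero => norm_num
  | succ d ih =>
      have h : (0:ℝ) < (289/200) ^ d := by positivity
      push_cast
      calc (d:ℝ) + 1 + 3 ≤ (289/200) * ((d:ℝ) + 3) := by nlinarith [Nat.cast_nonneg (α := ℝ) d]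
        _ ≤ (289/200) * (4 * (289/200) ^ d) := by nlinarith
        _ = 4 * (289/200) ^ (d + 1) := by ring

lemma sqrt_geom (d : ℕ) : Real.sqrt ((d + 1) / 2 ^ d) ≤ 2 * (17/20) ^ d := by
  have hq : ((d:ℝ) + 1) / 2 ^ d ≤ (2 * (17/20) ^ d) ^ 2 := by
    rw [div_le_iff₀ (by positivity)]
    have h1 : (2 * ((17:ℝ)/20) ^ d) ^ 2 * 2 ^ d = 4 * (289/200) ^ d := by
      rw [mul_pow, ← pow_mul, mul_comm d 2, pow_mul, mul_assoc, ← mul_pow]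
      norm_num
    rw [h1]
    linarith [nat_add_three_le d]
  calc Real.sqrt ((d + 1) / 2 ^ d) ≤ Real.sqrt ((2 * (17/20) ^ d) ^ 2) := Real.sqrt_le_sqrt hq
    _ = 2 * (17/20) ^ d := Real.sqrt_sq (by positivity)

lemma sqrt_shift (m d : ℕ) (hm : 1 ≤ m) :
    Real.sqrt ((↑(m + d) + 1) / 2 ^ (m + d))
      ≤ Real.sqrt ((m + 1) / 2 ^ m) * (2 * (17/20) ^ d) := by
  have h1 : (↑(m + d) + 1 : ℝ) / 2 ^ (m + d) ≤ ((m + 1) / 2 ^ m) * ((d + 1) / 2 ^ d) := by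
    rw [pow_add]
    have hmd : (↑(m + d) + 1 : ℝ) ≤ ((m:ℝ) + 1) * ((d:ℝ) + 1) := by
      push_cast
      have : (1:ℝ) ≤ (m:ℝ) := by exact_mod_cast hm
      nlinarith [Nat.cast_nonneg (α := ℝ) d]
    rw [div_le_iff₀ (by positivity), show ((m:ℝ)+1) / 2^m * (((d:ℝ)+1)/2^d) * (2^m * 2^d)
      = (((m:ℝ)+1) * ((d:ℝ)+1)) * ((2^m / 2^m) * (2^d / 2^d)) from by ring,
      div_self (by positivity : ((2:ℝ)^m) ≠ 0), div_self (by positivity : ((2:ℝ)^d) ≠ 0)]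
    simpa using hmd
  calc Real.sqrt ((↑(m + d) + 1) / 2 ^ (m + d))
      ≤ Real.sqrt (((m + 1) / 2 ^ m) * ((d + 1) / 2 ^ d)) := Real.sqrt_le_sqrt h1
    _ = Real.sqrt ((m + 1) / 2 ^ m) * Real.sqrt ((d + 1) / 2 ^ d) :=
        Real.sqrt_mul (by positivity) _
    _ ≤ Real.sqrt ((m + 1) / 2 ^ m) * (2 * (17/20) ^ d) := by
        exact mul_le_mul_of_nonneg_left (sqrt_geom d) (Real.sqrt_nonneg _)

lemma tsum_tail_bound (m : ℕ) (hm : 1 ≤ m) :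
    ∑' d : ℕ, ENNReal.ofReal (3 * Real.sqrt ((↑(m + d) + 1) / 2 ^ (m + d)))
      ≤ ENNReal.ofReal (42 * Real.sqrt (((m:ℝ) + 1) / 2 ^ m)) := by
  set A : ℝ := Real.sqrt (((m:ℝ) + 1) / 2 ^ m) with hA
  have hA0 : 0 ≤ A := Real.sqrt_nonneg _
  have h1 : ∀ d : ℕ, ENNReal.ofReal (3 * Real.sqrt ((↑(m + d) + 1) / 2 ^ (m + d)))
      ≤ ENNReal.ofReal (6 * A) * (ENNReal.ofReal (17/20)) ^ d := by
    intro d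
    rw [← ENNReal.ofReal_pow (by norm_num), ← ENNReal.ofReal_mul (by positivity)]
    refine ENNReal.ofReal_le_ofReal ?_
    have := sqrt_shift m d hm
    calc 3 * Real.sqrt ((↑(m + d) + 1) / 2 ^ (m + d)) ≤ 3 * (A * (2 * (17/20) ^ d)) := by
          gcongr
      _ = 6 * A * (17/20) ^ d := by ring
  calc ∑' d : ℕ, ENNReal.ofReal (3 * Real.sqrt ((↑(m + d) + 1) / 2 ^ (m + d)))
      ≤ ∑' d : ℕ, ENNReal.ofReal (6 * A) * (ENNReal.ofReal (17/20)) ^ d :=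
        ENNReal.tsum_le_tsum h1
    _ = ENNReal.ofReal (6 * A) * (1 - ENNReal.ofReal (17/20))⁻¹ := by
        rw [ENNReal.tsum_mul_left, ENNReal.tsum_geometric]
    _ ≤ ENNReal.ofReal (6 * A) * ENNReal.ofReal 7 := by
        gcongr
        rw [show (1:ℝ≥0∞) - ENNReal.ofReal (17/20) = ENNReal.ofReal (3/20) from by
          rw [← ENNReal.ofReal_one, ← ENNReal.ofReal_sub _ (by norm_num)]
          norm_num]
        rw [← ENNReal.ofReal_inv_of_pos (by norm_num)]
        exact ENNReal.ofReal_le_ofReal (by norm_num)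
    _ ≤ ENNReal.ofReal (42 * A) := by
        rw [← ENNReal.ofReal_mul (by positivity)]
        exact ENNReal.ofReal_le_ofReal (by nlinarith)


end BBAux

open BBAux

/-- There is a constant `c > 0` such that for every `n ≥ 2`,
`E|max_{1≤k≤n} |B_{k/n}| − max_{t∈[0,1]} |B_t|| ≤ c √(log n / n)`; in particular the
discretized maximum converges in `L¹` to `max_{t∈[0,1]} |B_t|` as `n → ∞`. -/
theorem discretized_max_abs_brownianBridge_L1
    {Ω : Type*} [MeasurableSpace Ω] (P : Measure Ω) [IsProbabilityMeasure P]
    (W : ℝ → Ω → ℝ) (hW : IsBrownianMotion P W)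
    (B : ℝ → Ω → ℝ) (hB : ∀ t ω, B t ω = W t ω - t * W 1 ω)
    (Xn : ℕ → Ω → ℝ)
    (hXn : ∀ (n : ℕ) (hn : 1 ≤ n) (ω : Ω),
      Xn n ω = (Finset.Icc 1 n).sup' (Finset.nonempty_Icc.mpr hn) fun k => |B (k / n) ω|)
    (X : Ω → ℝ) (hX : ∀ ω, X ω = ⨆ t : Set.Icc (0:ℝ) 1, |B t ω|) :
    (∃ c : ℝ, 0 < c ∧ ∀ n : ℕ, 2 ≤ n →
        (∫ ω, |Xn n ω - X ω| ∂P) ≤ c * Real.sqrt (Real.log n / n)) ∧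
      Tendsto (fun n => ∫ ω, |Xn n ω - X ω| ∂P) atTop (𝓝 0) := by
  have hxm : ∀ j : ℕ, Measurable (fun ω => lvl (fun t => W t ω) j) := by
    intro j
    have h := Finset.measurable_sup' (Finset.nonempty_range_iff.mpr
        (by positivity : (2 ^ j : ℕ) ≠ 0))
      (f := fun (i : ℕ) (ω : Ω) => |W (((i:ℝ) + 1) / 2 ^ j) ω - W ((i:ℝ) / 2 ^ j) ω|)
      (fun i _ => ((hW.meas _).sub (hW.meas _)).abs)
    have heq : (fun ω => lvl (fun t => W t ω) j)
        = (Finset.range (2 ^ j)).sup' (Finset.nonempty_range_iff.mpr (by positivity))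
          (fun (i : ℕ) (ω : Ω) => |W (((i:ℝ) + 1) / 2 ^ j) ω - W ((i:ℝ) / 2 ^ j) ω|) := by
      funext ω
      exact (Finset.sup'_apply (C := fun _ : Ω => ℝ)
        (Finset.nonempty_range_iff.mpr (by positivity))
        (fun (i : ℕ) (ω : Ω) => |W (((i:ℝ) + 1) / 2 ^ j) ω - W ((i:ℝ) / 2 ^ j) ω|) ω).symm
    rw [heq]
    exact h
  have key : ∀ n : ℕ, 2 ≤ n → (∫ ω, |Xn n ω - X ω| ∂P) ≤ 300 * Real.sqrt (Real.log n / n) := by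
    intro n hn
    set m : ℕ := Nat.log 2 n with hm_def
    have hm1 : 1 ≤ m :=
      (Nat.le_log_iff_pow_le (by norm_num) (by omega)).mpr (by simpa using hn)
    have h2m : (2:ℝ) ^ m ≤ n := by
      exact_mod_cast Nat.pow_log_le_self 2 (by omega)
    have hn2m : (n:ℝ) < 2 ^ (m + 1) := by
      exact_mod_cast Nat.lt_pow_succ_log_self (by norm_num) n
    have hnpos : (0:ℝ) < n := by positivity
    set ξ : ℕ → Ω → ℝ := fun j ω => lvl (fun t => W t ω) j with hξ_def
    set T : Ω → ℝ≥0∞ := fun ω => ∑' d : ℕ, ENNReal.ofReal (ξ (m + d) ω) with hT_def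
    set G : Ω → ℝ≥0∞ := fun ω => ENNReal.ofReal ((n:ℝ)⁻¹ * |W 1 ω|) + 2 * T ω with hG_def
    -- a.e. pointwise domination
    have hae : ∀ᵐ ω ∂P, ENNReal.ofReal |Xn n ω - X ω| ≤ G ω := by
      filter_upwards [hW.cont] with ω hcont
      have hBc : Continuous (fun t => B t ω) := by
        have hBe : (fun t => B t ω) = fun t => W t ω - t * W 1 ω := funext fun t => hB t ω
        rw [hBe]
        exact hcont.sub (continuous_id.mul continuous_const)
      have hbdd : BddAbove (Set.range fun t : Set.Icc (0:ℝ) 1 => |B t ω|) := by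
        have hsub : Set.range (fun t : Set.Icc (0:ℝ) 1 => |B t ω|)
            ⊆ (fun u => |B u ω|) '' Set.Icc (0:ℝ) 1 := by
          rintro _ ⟨t, rfl⟩
          exact ⟨t, t.2, rfl⟩
        exact ((isCompact_Icc.image_of_continuousOn hBc.abs.continuousOn).bddAbove).mono hsub
      haveI : Nonempty (Set.Icc (0:ℝ) 1) := ⟨⟨0, by norm_num⟩⟩
      have hXnleX : Xn n ω ≤ X ω := by
        rw [hXn n (by omega) ω, hX ω]
        refine Finset.sup'_le _ _ fun k hk => ?_
        rw [Finset.mem_Icc] at hk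
        have hmem : ((k:ℝ) / n) ∈ Set.Icc (0:ℝ) 1 :=
          ⟨by positivity, by rw [div_le_one hnpos]; exact_mod_cast hk.2⟩
        exact le_ciSup hbdd ⟨(k:ℝ) / n, hmem⟩
      rw [abs_sub_comm, abs_of_nonneg (sub_nonneg.mpr hXnleX)]
      by_cases hTtop : T ω = ⊤
      · rw [hG_def]
        simp only [hTtop, ENNReal.mul_top (by norm_num : (2:ℝ≥0∞) ≠ 0)]
        simp
      · have hsummable : Summable fun d => ξ (m + d) ω := by
          have h1 := ENNReal.summable_toReal hTtop
          refine h1.congr fun d => ?_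
          exact ENNReal.toReal_ofReal (lvl_nonneg _ _)
        have htsum : ENNReal.ofReal (∑' d, ξ (m + d) ω) = T ω :=
          ENNReal.ofReal_tsum_of_nonneg (fun d => lvl_nonneg _ _) hsummable
        have hreal : X ω - Xn n ω ≤ (n:ℝ)⁻¹ * |W 1 ω| + 2 * ∑' d, ξ (m + d) ω := by
          rw [sub_le_iff_le_add, hX ω]
          refine ciSup_le fun tp => ?_
          obtain ⟨u, hu⟩ := tp
          set k : ℕ := max 1 ⌈u * n⌉₊ with hk_def
          have hk1 : 1 ≤ k := le_max_left _ _
          have hkn : k ≤ n := by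
            refine max_le (by omega) (Nat.ceil_le.mpr ?_)
            calc u * n ≤ 1 * n := mul_le_mul_of_nonneg_right hu.2 (le_of_lt hnpos)
              _ = (n:ℝ) := one_mul _
          have hdist : |u - (k:ℝ) / n| ≤ (n:ℝ)⁻¹ := by
            have hinv : (0:ℝ) < (n:ℝ)⁻¹ := by positivity
            rcases le_or_gt (⌈u * n⌉₊) 1 with hc | hc
            · have hk1' : k = 1 := by omega
              have hun : u ≤ 1 / n := by
                rw [le_div_iff₀ hnpos]
                calc u * n ≤ (⌈u * n⌉₊ : ℝ) := Nat.le_ceil _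
                  _ ≤ 1 := by exact_mod_cast hc
              have he : (1:ℝ) / n = (n:ℝ)⁻¹ := one_div _
              rw [hk1', Nat.cast_one, abs_le]
              constructor <;> [linarith [hu.1]; linarith]
            · have hk2' : k = ⌈u * n⌉₊ := by omega
              have h1 : u * n ≤ (k:ℝ) := by rw [hk2']; exact Nat.le_ceil _
              have h2 : (k:ℝ) < u * n + 1 := by
                rw [hk2']
                have := Nat.ceil_lt_add_one (mul_nonneg hu.1 hnpos.le)
                exact_mod_cast this
              have hd1 : u ≤ (k:ℝ) / n := by rw [le_div_iff₀ hnpos]; exact h1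
              have hd2 : (k:ℝ) / n ≤ u + (n:ℝ)⁻¹ := by
                rw [div_le_iff₀ hnpos]
                have he : (u + (n:ℝ)⁻¹) * n = u * n + 1 := by field_simp
                rw [he]; linarith
              rw [abs_le]
              constructor <;> linarith
          have hmemk : ((k:ℝ) / n) ∈ Set.Icc (0:ℝ) 1 :=
            ⟨by positivity, by rw [div_le_one hnpos]; exact_mod_cast hkn⟩
          have hinvm : (n:ℝ)⁻¹ ≤ ((2:ℝ) ^ m)⁻¹ := by
            rw [← one_div, ← one_div]
            exact one_div_le_one_div_of_le (by positivity) h2m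
          have hchain : |W u ω - W ((k:ℝ) / n) ω| ≤ 2 * ∑' d, ξ (m + d) ω :=
            chain_bound (fun t => W t ω) hcont hmemk ⟨hu.1, hu.2⟩ m
              (hdist.trans hinvm) hsummable
          have hBdiff : |B u ω - B ((k:ℝ) / n) ω|
              ≤ |W u ω - W ((k:ℝ) / n) ω| + (n:ℝ)⁻¹ * |W 1 ω| := by
            rw [hB u ω, hB ((k:ℝ) / n) ω]
            have he : W u ω - u * W 1 ω - (W ((k:ℝ) / n) ω - (k:ℝ) / n * W 1 ω)
                = (W u ω - W ((k:ℝ) / n) ω) - (u - (k:ℝ) / n) * W 1 ω := by ring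
            rw [he]
            calc |(W u ω - W ((k:ℝ) / n) ω) - (u - (k:ℝ) / n) * W 1 ω|
                ≤ |W u ω - W ((k:ℝ) / n) ω| + |(u - (k:ℝ) / n) * W 1 ω| := by
                  exact abs_sub _ _
              _ ≤ |W u ω - W ((k:ℝ) / n) ω| + (n:ℝ)⁻¹ * |W 1 ω| := by
                  rw [abs_mul]
                  gcongr
          have hBk : |B ((k:ℝ) / n) ω| ≤ Xn n ω := by
            rw [hXn n (by omega) ω]
            exact Finset.le_sup' (fun k : ℕ => |B ((k:ℝ) / n) ω|)
              (Finset.mem_Icc.mpr ⟨hk1, hkn⟩)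
          calc |B u ω| ≤ |B ((k:ℝ) / n) ω| + |B u ω - B ((k:ℝ) / n) ω| := by
                have := abs_sub_abs_le_abs_sub (B u ω) (B ((k:ℝ) / n) ω)
                linarith
            _ ≤ _ := by linarith
        calc ENNReal.ofReal (X ω - Xn n ω)
            ≤ ENNReal.ofReal ((n:ℝ)⁻¹ * |W 1 ω| + 2 * ∑' d, ξ (m + d) ω) :=
              ENNReal.ofReal_le_ofReal hreal
          _ = ENNReal.ofReal ((n:ℝ)⁻¹ * |W 1 ω|)
              + ENNReal.ofReal (2 * ∑' d, ξ (m + d) ω) :=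
              ENNReal.ofReal_add (by positivity)
                (mul_nonneg (by norm_num) (tsum_nonneg fun d => lvl_nonneg _ _))
          _ = G ω := by
              rw [hG_def]
              congr 1
              rw [ENNReal.ofReal_mul (by norm_num : (0:ℝ) ≤ 2), ENNReal.ofReal_ofNat, htsum]
    -- integral of |W 1|
    have hWabs : ∫⁻ ω, ENNReal.ofReal |W 1 ω| ∂P ≤ ENNReal.ofReal 4 := by
      have hcongr : ∫⁻ ω, ENNReal.ofReal |W 1 ω| ∂P
          = ∫⁻ ω, ENNReal.ofReal |W 1 ω - W 0 ω| ∂P := by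
        refine lintegral_congr_ae ?_
        filter_upwards [hW.init] with ω h0
        rw [h0, sub_zero]
      rw [hcongr]
      have hmono : ∀ ω, ENNReal.ofReal |W 1 ω - W 0 ω|
          ≤ ENNReal.ofReal (Real.exp (1 * |W 1 ω - W 0 ω|)) := fun ω => by
        refine ENNReal.ofReal_le_ofReal ?_
        rw [one_mul]
        linarith [Real.add_one_le_exp (|W 1 ω - W 0 ω|)]
      refine le_trans (lintegral_mono hmono) ?_
      have hmap := hW.law 0 1 le_rfl (by norm_num)
      have hb := lintegral_exp_abs_of_map P (fun ω => W 1 ω - W 0 ω)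
        ((hW.meas 1).sub (hW.meas 0)) (Real.toNNReal (1 - 0)) (by norm_num) hmap 1
      refine hb.trans ?_
      have hc : ((Real.toNNReal ((1:ℝ) - 0) : ℝ≥0) : ℝ) = 1 := by
        rw [Real.coe_toNNReal _ (by norm_num)]; norm_num
      rw [hc]
      have he : Real.exp ((1:ℝ) ^ 2 * 1 / 2) ≤ 2 := by
        have hx : Real.exp ((1:ℝ)/2) * Real.exp ((1:ℝ)/2) = Real.exp 1 := by
          rw [← Real.exp_add]; norm_num
        have h9 := Real.exp_one_lt_d9
        have hq : ((1:ℝ) ^ 2 * 1 / 2) = 1/2 := by norm_num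
        rw [hq]
        nlinarith [Real.exp_pos ((1:ℝ)/2)]
      calc (2:ℝ≥0∞) * ENNReal.ofReal (Real.exp ((1:ℝ) ^ 2 * 1 / 2))
          ≤ 2 * ENNReal.ofReal 2 := by gcongr
        _ = ENNReal.ofReal 4 := by
            rw [show (2:ℝ≥0∞) = ENNReal.ofReal 2 from (ENNReal.ofReal_ofNat 2).symm,
              ← ENNReal.ofReal_mul (by norm_num)]
            norm_num
    have hTmeas : Measurable T := Measurable.ennreal_tsum fun d => (hxm (m + d)).ennreal_ofReal
    have hlint : ∫⁻ ω, ENNReal.ofReal |Xn n ω - X ω| ∂P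
        ≤ ENNReal.ofReal (4 * (n:ℝ)⁻¹ + 84 * Real.sqrt (((m:ℝ) + 1) / 2 ^ m)) := by
      calc ∫⁻ ω, ENNReal.ofReal |Xn n ω - X ω| ∂P ≤ ∫⁻ ω, G ω ∂P := lintegral_mono_ae hae
        _ = ∫⁻ ω, ENNReal.ofReal ((n:ℝ)⁻¹ * |W 1 ω|) ∂P + 2 * ∫⁻ ω, T ω ∂P := by
            rw [hG_def]
            rw [lintegral_add_left (((hW.meas 1).abs.const_mul _).ennreal_ofReal)]
            rw [lintegral_const_mul 2 hTmeas]
        _ ≤ ENNReal.ofReal ((n:ℝ)⁻¹) * ENNReal.ofReal 4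
            + 2 * ENNReal.ofReal (42 * Real.sqrt (((m:ℝ) + 1) / 2 ^ m)) := by
            gcongr
            · have hmul : ∀ ω, ENNReal.ofReal ((n:ℝ)⁻¹ * |W 1 ω|)
                  = ENNReal.ofReal ((n:ℝ)⁻¹) * ENNReal.ofReal |W 1 ω| := fun ω =>
                ENNReal.ofReal_mul (by positivity)
              simp_rw [hmul]
              rw [lintegral_const_mul _ ((hW.meas 1).abs.ennreal_ofReal)]
              exact mul_le_mul_right hWabs _
            · rw [hT_def]
              rw [lintegral_tsum (fun d => ((hxm (m + d)).ennreal_ofReal).aemeasurable)]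
              refine le_trans (ENNReal.tsum_le_tsum fun d =>
                lintegral_lvl_le P W hW.meas hW.law (m + d)) ?_
              exact tsum_tail_bound m hm1
        _ = ENNReal.ofReal (4 * (n:ℝ)⁻¹ + 84 * Real.sqrt (((m:ℝ) + 1) / 2 ^ m)) := by
            rw [← ENNReal.ofReal_mul (by positivity),
              show (2:ℝ≥0∞) = ENNReal.ofReal 2 from (ENNReal.ofReal_ofNat 2).symm,
              ← ENNReal.ofReal_mul (by norm_num),
              ← ENNReal.ofReal_add (by positivity) (by positivity)]
            ring_nf
    have hbound : (∫ ω, |Xn n ω - X ω| ∂P)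
        ≤ 4 * (n:ℝ)⁻¹ + 84 * Real.sqrt (((m:ℝ) + 1) / 2 ^ m) := by
      by_cases hInt : Integrable (fun ω => |Xn n ω - X ω|) P
      · rw [integral_eq_lintegral_of_nonneg_ae
          (Filter.Eventually.of_forall fun ω => abs_nonneg _) hInt.1]
        exact ENNReal.toReal_le_of_le_ofReal (by positivity) hlint
      · rw [integral_undef hInt]
        positivity
    refine hbound.trans ?_
    have hlog2 := Real.log_two_gt_d9
    have hlogn : Real.log 2 ≤ Real.log n :=
      Real.log_le_log (by norm_num) (by exact_mod_cast hn)
    have hlogpos : (0:ℝ) < Real.log n := lt_of_lt_of_le (by linarith) hlogn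
    have hmlog : (m:ℝ) * Real.log 2 ≤ Real.log n := by
      calc (m:ℝ) * Real.log 2 = Real.log ((2:ℝ) ^ m) := by rw [Real.log_pow]
        _ ≤ Real.log n := Real.log_le_log (by positivity) h2m
    have hm3 : (m:ℝ) + 1 ≤ 3 * Real.log n := by
      have hmr : (1:ℝ) ≤ m := by exact_mod_cast hm1
      nlinarith
    have hpm : ((2:ℝ) ^ m)⁻¹ ≤ 2 * (n:ℝ)⁻¹ := by
      have hs : (n:ℝ) / 2 ≤ 2 ^ m := by
        rw [pow_succ] at hn2m; linarith
      calc ((2:ℝ) ^ m)⁻¹ = 1 / (2:ℝ) ^ m := (one_div _).symm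
        _ ≤ 1 / ((n:ℝ) / 2) := one_div_le_one_div_of_le (by positivity) hs
        _ = 2 * (n:ℝ)⁻¹ := by field_simp
    have hfrac : ((m:ℝ) + 1) / 2 ^ m ≤ 6 * (Real.log n / n) := by
      calc ((m:ℝ) + 1) / 2 ^ m = ((m:ℝ) + 1) * ((2:ℝ) ^ m)⁻¹ := div_eq_mul_inv _ _
        _ ≤ (3 * Real.log n) * (2 * (n:ℝ)⁻¹) :=
            mul_le_mul hm3 hpm (by positivity) (by positivity)
        _ = 6 * (Real.log n / n) := by rw [div_eq_mul_inv]; ring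
    have hsq : Real.sqrt (((m:ℝ) + 1) / 2 ^ m) ≤ 2.5 * Real.sqrt (Real.log n / n) := by
      calc Real.sqrt (((m:ℝ) + 1) / 2 ^ m) ≤ Real.sqrt (6 * (Real.log n / n)) :=
            Real.sqrt_le_sqrt hfrac
        _ = Real.sqrt 6 * Real.sqrt (Real.log n / n) := Real.sqrt_mul (by norm_num) _
        _ ≤ 2.5 * Real.sqrt (Real.log n / n) := by
            have h6 : Real.sqrt 6 ≤ 2.5 := by
              rw [show (2.5:ℝ) = Real.sqrt (2.5 ^ 2) from (Real.sqrt_sq (by norm_num)).symm]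
              exact Real.sqrt_le_sqrt (by norm_num)
            exact mul_le_mul_of_nonneg_right h6 (Real.sqrt_nonneg _)
    have hinvsq : (n:ℝ)⁻¹ ≤ Real.sqrt (Real.log n / n) := by
      rw [show (n:ℝ)⁻¹ = Real.sqrt (((n:ℝ)⁻¹) ^ 2) from (Real.sqrt_sq (by positivity)).symm]
      refine Real.sqrt_le_sqrt ?_
      have h2 : (n:ℝ)⁻¹ ≤ 1 / 2 := by
        rw [← one_div]
        exact one_div_le_one_div_of_le (by norm_num) (by exact_mod_cast hn)
      have h3 : (1:ℝ) / 2 ≤ Real.log n := le_trans (by linarith) hlogn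
      have hi : (0:ℝ) < (n:ℝ)⁻¹ := by positivity
      rw [div_eq_mul_inv, sq]
      exact mul_le_mul_of_nonneg_right (h2.trans h3) hi.le
    calc 4 * (n:ℝ)⁻¹ + 84 * Real.sqrt (((m:ℝ) + 1) / 2 ^ m)
        ≤ 4 * Real.sqrt (Real.log n / n) + 84 * (2.5 * Real.sqrt (Real.log n / n)) :=
          add_le_add (mul_le_mul_of_nonneg_left hinvsq (by norm_num))
            (mul_le_mul_of_nonneg_left hsq (by norm_num))
      _ ≤ 300 * Real.sqrt (Real.log n / n) := by
          nlinarith [Real.sqrt_nonneg (Real.log n / n)]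
  refine ⟨⟨300, by norm_num, key⟩, ?_⟩
  have hnn : ∀ k : ℕ, (0:ℝ) ≤ ∫ ω, |Xn k ω - X ω| ∂P := fun k =>
    integral_nonneg fun ω => abs_nonneg _
  have h0 : Tendsto (fun k : ℕ => 300 * Real.sqrt (Real.log k / k)) atTop (𝓝 0) := by
    have h1 : Tendsto (fun x : ℝ => Real.log x / x) atTop (𝓝 0) :=
      Real.isLittleO_log_id_atTop.tendsto_div_nhds_zero
    have h2 : Tendsto (fun k : ℕ => Real.log k / k) atTop (𝓝 0) :=
      h1.comp tendsto_natCast_atTop_atTop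
    have h3 : Tendsto (fun k : ℕ => Real.sqrt (Real.log k / k)) atTop (𝓝 0) := by
      have h4 := (Real.continuous_sqrt.tendsto 0).comp h2
      rw [Real.sqrt_zero] at h4
      exact h4
    have h5 := h3.const_mul (300:ℝ)
    rw [mul_zero] at h5
    exact h5
  refine tendsto_of_tendsto_of_tendsto_of_le_of_le' tendsto_const_nhds h0
    (Eventually.of_forall hnn) ?_
  exact eventually_atTop.2 ⟨2, fun k hk => key k hk⟩
end
end

section
/- There exists a constant C > 0 such that for every N ≥ 1 and every ε > 0, P( |M_N − M̃| > ε ) ≤ (C N² / ε) · 2^{−N/2}, where, with n = 2^N − 1, M_N = max over all subsets 𝔍 ⊆ {1,…,N} of | ∑_{m∈𝔍} ( B_{(2^m−1)/n} − B_{(2^{m−1}−1)/n} ) | and M̃ = (1/2) ∑_{l=1}^∞ | B_{2^{−(l−1)}} − B_{2^{−l}} | (the series converges almost surely). In particular M_N converges to M̃ in distribution as N → ∞. -/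
open MeasureTheory ProbabilityTheory Filter
open scoped NNReal ENNReal Topology

noncomputable section

section Helpers
open Real Set

lemma my_integral_Ioi_x_exp {b : ℝ} (hb : 0 < b) :
    ∫ x in Set.Ioi (0:ℝ), x * Real.exp (-b * x ^ 2) = (2*b)⁻¹ := by
  have hderiv : ∀ x ∈ Set.Ici (0:ℝ),
      HasDerivAt (fun y => -(2*b)⁻¹ * Real.exp (-b * y^2)) (x * Real.exp (-b * x^2)) x := by
    intro x _
    have h1 : HasDerivAt (fun y : ℝ => -b * y^2) (-b * (2*x^1)) x :=
      (hasDerivAt_pow 2 x).const_mul (-b)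
    have h2 := (h1.exp).const_mul (-(2*b)⁻¹)
    refine h2.congr_deriv ?_
    field_simp
  have htend : Tendsto (fun y => -(2*b)⁻¹ * Real.exp (-b * y^2)) atTop (𝓝 0) := by
    have h3 : Tendsto (fun y : ℝ => -b * y^2) atTop atBot := by
      have h4 : Tendsto (fun y : ℝ => b * y^2) atTop atTop :=
        (tendsto_pow_atTop (n := 2) (by norm_num)).const_mul_atTop hb
      simpa [neg_mul] using tendsto_neg_atBot_iff.mpr h4
    have h5 : Tendsto (fun y : ℝ => Real.exp (-b * y^2)) atTop (𝓝 0) :=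
      Real.tendsto_exp_atBot.comp h3
    simpa using h5.const_mul (-(2*b)⁻¹)
  have := integral_Ioi_of_hasDerivAt_of_tendsto' hderiv
    ((integrable_mul_exp_neg_mul_sq hb).integrableOn) htend
  rw [this]
  simp

lemma my_integral_abs_exp {b : ℝ} (hb : 0 < b) :
    Integrable (fun x => |x| * Real.exp (-b * x ^ 2)) (volume : Measure ℝ) ∧
      ∫ x : ℝ, |x| * Real.exp (-b * x ^ 2) = b⁻¹ := by
  have hint : Integrable (fun x => |x| * Real.exp (-b * x ^ 2)) (volume : Measure ℝ) := by
    have := (integrable_mul_exp_neg_mul_sq hb).abs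
    refine this.congr ?_
    filter_upwards with x
    rw [abs_mul, abs_of_pos (Real.exp_pos _)]
  refine ⟨hint, ?_⟩
  have h1 : ∀ x : ℝ, |x| * Real.exp (-b * x ^ 2) = |x| * Real.exp (-b * |x| ^ 2) := by
    intro x; rw [sq_abs]
  calc ∫ x : ℝ, |x| * Real.exp (-b * x ^ 2)
      = ∫ x : ℝ, |x| * Real.exp (-b * |x| ^ 2) := by simp_rw [h1]
    _ = 2 * ∫ x in Set.Ioi (0:ℝ), x * Real.exp (-b * x ^ 2) :=
        integral_comp_abs (f := fun y => y * Real.exp (-b * y ^ 2))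
    _ = b⁻¹ := by rw [my_integral_Ioi_x_exp hb]; field_simp

lemma my_gaussian_abs (v : ℝ≥0) :
    Integrable (fun x => |x|) (gaussianReal 0 v) ∧
      ∫ x, |x| ∂(gaussianReal 0 v) ≤ Real.sqrt v := by
  rcases eq_or_ne v 0 with hv | hv
  · subst hv
    rw [gaussianReal_zero_var]
    constructor
    · refine ⟨continuous_abs.aestronglyMeasurable, ?_⟩
      rw [HasFiniteIntegral, lintegral_dirac]
      simp
    · rw [integral_dirac]
      simp
  · have hvpos : (0:ℝ) < (v:ℝ) := by positivity
    set b : ℝ := (2 * (v:ℝ))⁻¹ with hbdef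
    have hb : 0 < b := by positivity
    have hpdf : ∀ x : ℝ, gaussianPDFReal 0 v x
        = (Real.sqrt (2 * Real.pi * v))⁻¹ * Real.exp (-b * x ^ 2) := by
      intro x
      rw [gaussianPDFReal]
      congr 1
      rw [hbdef]
      congr 1
      field_simp
      ring
    have hmeas : AEMeasurable (fun x => (gaussianPDFReal 0 v x).toNNReal)
        (volume : Measure ℝ) :=
      ((measurable_gaussianPDFReal 0 v).real_toNNReal).aemeasurable
    have hrw : gaussianReal 0 v
        = (volume : Measure ℝ).withDensity (fun x => ((gaussianPDFReal 0 v x).toNNReal : ℝ≥0∞)) := by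
      rw [gaussianReal_of_var_ne_zero 0 hv]
      rfl
    have hsmul : ∀ x : ℝ, ((gaussianPDFReal 0 v x).toNNReal • |x| : ℝ)
        = (Real.sqrt (2 * Real.pi * v))⁻¹ * (|x| * Real.exp (-b * x ^ 2)) := by
      intro x
      rw [NNReal.smul_def, smul_eq_mul, Real.coe_toNNReal _ (gaussianPDFReal_nonneg 0 v x), hpdf x]
      ring
    have hint : Integrable (fun x => |x|) (gaussianReal 0 v) := by
      rw [hrw, integrable_withDensity_iff_integrable_smul₀ hmeas]
      refine (((my_integral_abs_exp hb).1.const_mul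
        ((Real.sqrt (2 * Real.pi * v))⁻¹)).congr ?_)
      filter_upwards with x
      exact (hsmul x).symm
    refine ⟨hint, ?_⟩
    have hval : ∫ x, |x| ∂(gaussianReal 0 v)
        = (Real.sqrt (2 * Real.pi * v))⁻¹ * (2 * (v:ℝ)) := by
      rw [hrw, integral_withDensity_eq_integral_smul₀ hmeas]
      simp_rw [hsmul]
      rw [integral_const_mul, (my_integral_abs_exp hb).2, hbdef, inv_inv]
    rw [hval]
    have hsqrt : 2 * Real.sqrt (v:ℝ) ≤ Real.sqrt (2 * Real.pi * v) := by
      have h4 : Real.sqrt (4 * (v:ℝ)) ≤ Real.sqrt (2 * Real.pi * v) := by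
        apply Real.sqrt_le_sqrt
        nlinarith [Real.pi_gt_three]
      calc 2 * Real.sqrt (v:ℝ) = Real.sqrt 4 * Real.sqrt (v:ℝ) := by
            rw [show (4:ℝ) = 2^2 by norm_num, Real.sqrt_sq (by norm_num : (0:ℝ) ≤ 2)]
        _ = Real.sqrt (4 * (v:ℝ)) := (Real.sqrt_mul (by norm_num) _).symm
        _ ≤ _ := h4
    have hpos2 : 0 < 2 * Real.sqrt (v:ℝ) := by positivity
    calc (Real.sqrt (2 * Real.pi * v))⁻¹ * (2 * (v:ℝ))
        ≤ (2 * Real.sqrt (v:ℝ))⁻¹ * (2 * (v:ℝ)) := by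
          apply mul_le_mul_of_nonneg_right _ (by positivity)
          exact inv_anti₀ hpos2 hsqrt
      _ = (v:ℝ) / Real.sqrt (v:ℝ) := by
          rw [mul_inv]
          field_simp
      _ = Real.sqrt (v:ℝ) := Real.div_sqrt

lemma my_abs_moment {Ω : Type*} [MeasurableSpace Ω] {P : Measure Ω} {X : Ω → ℝ}
    (hm : Measurable X) {v : ℝ≥0} (hmap : Measure.map X P = gaussianReal 0 v) :
    Integrable X P ∧ ∫ ω, |X ω| ∂P ≤ Real.sqrt v := by
  have h1 : Integrable (fun x => |x|) (Measure.map X P) := hmap ▸ (my_gaussian_abs v).1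
  have h2 : Integrable (fun ω => |X ω|) P :=
    (integrable_map_measure continuous_abs.aestronglyMeasurable hm.aemeasurable).mp h1
  constructor
  · exact h2.mono' hm.aestronglyMeasurable (by filter_upwards with ω; simp [Real.norm_eq_abs])
  · have h3 : ∫ ω, |X ω| ∂P = ∫ x, |x| ∂(Measure.map X P) :=
      (integral_map hm.aemeasurable continuous_abs.aestronglyMeasurable).symm
    rw [h3, hmap]
    exact (my_gaussian_abs v).2

lemma my_sup'_powerset {N : ℕ} (x : ℕ → ℝ) (h0 : ∑ m ∈ Finset.range N, x m = 0) :
    ((Finset.range N).powerset).sup' ⟨∅, Finset.empty_mem_powerset _⟩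
      (fun S => |∑ m ∈ S, x m|) = (1/2) * ∑ m ∈ Finset.range N, |x m| := by
  set A := ∑ m ∈ Finset.range N, max (x m) 0 with hA
  have hApos : ∀ m, 0 ≤ max (x m) 0 := fun m => le_max_right _ _
  have hAB : A - ∑ m ∈ Finset.range N, max (-x m) 0 = 0 := by
    rw [hA, ← Finset.sum_sub_distrib]
    have hc : ∀ m ∈ Finset.range N, max (x m) 0 - max (-x m) 0 = x m := by
      intro m _
      rcases le_total (x m) 0 with h | h
      · rw [max_eq_right h, max_eq_left (by linarith), zero_sub, neg_neg]
      · rw [max_eq_left h, max_eq_right (by linarith), sub_zero]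
    rw [Finset.sum_congr rfl hc, h0]
  have hAhalf : A = (1/2) * ∑ m ∈ Finset.range N, |x m| := by
    have : A + ∑ m ∈ Finset.range N, max (-x m) 0 = ∑ m ∈ Finset.range N, |x m| := by
      rw [hA, ← Finset.sum_add_distrib]
      apply Finset.sum_congr rfl
      intro m _
      rcases le_total (x m) 0 with h | h
      · rw [max_eq_right h, max_eq_left (by linarith), zero_add, abs_of_nonpos h]
      · rw [max_eq_left h, max_eq_right (by linarith), add_zero, abs_of_nonneg h]
    linarith
  apply le_antisymm
  · apply Finset.sup'_le
    intro S hS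
    rw [Finset.mem_powerset] at hS
    rw [← hAhalf, abs_le]
    constructor
    · have h1 : -A ≤ -(∑ m ∈ S, max (-x m) 0) := by
        apply neg_le_neg
        calc ∑ m ∈ S, max (-x m) 0 ≤ ∑ m ∈ Finset.range N, max (-x m) 0 :=
              Finset.sum_le_sum_of_subset_of_nonneg hS (fun m _ _ => le_max_right _ _)
          _ = A := by linarith
      refine h1.trans ?_
      rw [neg_le]
      calc -∑ m ∈ S, x m = ∑ m ∈ S, -x m := by rw [Finset.sum_neg_distrib]
        _ ≤ ∑ m ∈ S, max (-x m) 0 := Finset.sum_le_sum fun m _ => le_max_left _ _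
    · calc ∑ m ∈ S, x m ≤ ∑ m ∈ S, max (x m) 0 := Finset.sum_le_sum fun m _ => le_max_left _ _
        _ ≤ A := Finset.sum_le_sum_of_subset_of_nonneg hS (fun m _ _ => le_max_right _ _)
  · have hmem : (Finset.range N).filter (fun m => 0 ≤ x m) ∈ (Finset.range N).powerset :=
      Finset.mem_powerset.mpr (Finset.filter_subset _ _)
    refine le_trans ?_ (Finset.le_sup' _ hmem)
    have hsum : ∑ m ∈ (Finset.range N).filter (fun m => 0 ≤ x m), x m = A := by
      rw [hA, Finset.sum_filter]
      apply Finset.sum_congr rfl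
      intro m _
      rcases le_or_gt 0 (x m) with h | h
      · rw [if_pos h, max_eq_left h]
      · rw [if_neg (not_le.mpr h), max_eq_right h.le]
    rw [hsum, ← hAhalf]
    exact le_abs_self A

lemma my_tsum_integral {Ω : Type*} [MeasurableSpace Ω] {P : Measure Ω}
    {g : ℕ → Ω → ℝ} (hm : ∀ j, Measurable (g j)) (hnn : ∀ j ω, 0 ≤ g j ω)
    {c : ℕ → ℝ} (hint : ∀ j, Integrable (g j) P) (hle : ∀ j, ∫ ω, g j ω ∂P ≤ c j)
    (hc : Summable c) :
    (∀ᵐ ω ∂P, Summable fun j => g j ω) ∧ Integrable (fun ω => ∑' j, g j ω) P ∧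
      ∫ ω, (∑' j, g j ω) ∂P ≤ ∑' j, c j := by
  set G : Ω → ℝ≥0∞ := fun ω => ∑' j, ENNReal.ofReal (g j ω) with hG
  have hGm : Measurable G := Measurable.ennreal_tsum fun j => (hm j).ennreal_ofReal
  have hcnn : ∀ j, 0 ≤ c j := fun j => le_trans (integral_nonneg (hnn j)) (hle j)
  have hGle : ∫⁻ ω, G ω ∂P ≤ ENNReal.ofReal (∑' j, c j) := by
    rw [hG]
    simp only
    rw [lintegral_tsum fun j => ((hm j).ennreal_ofReal).aemeasurable]
    rw [ENNReal.ofReal_tsum_of_nonneg hcnn hc]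
    apply ENNReal.tsum_le_tsum
    intro j
    rw [← ofReal_integral_eq_lintegral_ofReal (hint j) (ae_of_all _ (hnn j))]
    exact ENNReal.ofReal_le_ofReal (hle j)
  have hGlt : ∫⁻ ω, G ω ∂P ≠ ⊤ := (lt_of_le_of_lt hGle ENNReal.ofReal_lt_top).ne
  have hae : ∀ᵐ ω ∂P, G ω < ⊤ := ae_lt_top hGm hGlt
  have hsummable : ∀ᵐ ω ∂P, Summable fun j => g j ω := by
    filter_upwards [hae] with ω hω
    have h1 := ENNReal.summable_toReal hω.ne
    refine h1.congr fun j => ?_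
    rw [ENNReal.toReal_ofReal (hnn j ω)]
  have hGeq : (fun ω => ∑' j, g j ω) = fun ω => (G ω).toReal := by
    funext ω
    rw [hG]
    simp only
    rw [ENNReal.tsum_toReal_eq fun j => ENNReal.ofReal_ne_top]
    exact tsum_congr fun j => (ENNReal.toReal_ofReal (hnn j ω)).symm
  have hint' : Integrable (fun ω => ∑' j, g j ω) P := by
    rw [hGeq]
    exact integrable_toReal_of_lintegral_ne_top hGm.aemeasurable hGlt
  refine ⟨hsummable, hint', ?_⟩
  rw [hGeq, integral_toReal hGm.aemeasurable hae]
  have h2 := ENNReal.toReal_mono ENNReal.ofReal_ne_top hGle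
  rwa [ENNReal.toReal_ofReal (tsum_nonneg hcnn)] at h2

end Helpers

lemma my_bridge_moment {Ω : Type*} [MeasurableSpace Ω] {P : Measure Ω}
    [IsProbabilityMeasure P] {W : ℝ → Ω → ℝ} (hW : IsBrownianMotion P W)
    {B : ℝ → Ω → ℝ} (hB : ∀ t ω, B t ω = W t ω - t * W 1 ω)
    {s t : ℝ} (hs : 0 ≤ s) (hst : s ≤ t) :
    Integrable (fun ω => B t ω - B s ω) P ∧
      ∫ ω, |B t ω - B s ω| ∂P ≤ Real.sqrt (t - s) + (t - s) := by
  have hWs : Measurable fun ω => W t ω - W s ω := (hW.meas t).sub (hW.meas s)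
  have h1 := my_abs_moment hWs (hW.law s t hs hst)
  have h1' : ∫ ω, |W t ω - W s ω| ∂P ≤ Real.sqrt (t - s) := by
    refine h1.2.trans ?_
    rw [Real.coe_toNNReal _ (sub_nonneg.mpr hst)]
  have hW1m : Measurable fun ω => W 1 ω - W 0 ω := (hW.meas 1).sub (hW.meas 0)
  have h2 := my_abs_moment hW1m (hW.law 0 1 le_rfl zero_le_one)
  have hW1ae : (fun ω => W 1 ω - W 0 ω) =ᵐ[P] W 1 := by
    filter_upwards [hW.init] with ω h
    simp [h]
  have hW1 : Integrable (W 1) P := h2.1.congr hW1ae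
  have hW1abs : ∫ ω, |W 1 ω| ∂P ≤ 1 := by
    have : ∫ ω, |W 1 ω| ∂P = ∫ ω, |W 1 ω - W 0 ω| ∂P := by
      apply integral_congr_ae
      filter_upwards [hW1ae] with ω h
      rw [h]
    rw [this]
    refine h2.2.trans ?_
    norm_num
  have heq : (fun ω => B t ω - B s ω) = fun ω => (W t ω - W s ω) - (t - s) * W 1 ω := by
    funext ω
    rw [hB, hB]
    ring
  have hint : Integrable (fun ω => B t ω - B s ω) P := by
    rw [heq]
    exact h1.1.sub (hW1.const_mul (t - s))
  refine ⟨hint, ?_⟩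
  have hle : ∀ ω, |B t ω - B s ω| ≤ |W t ω - W s ω| + (t - s) * |W 1 ω| := by
    intro ω
    rw [hB, hB]
    have h3 : W t ω - t * W 1 ω - (W s ω - s * W 1 ω)
        = (W t ω - W s ω) - (t - s) * W 1 ω := by ring
    rw [h3]
    refine (abs_sub _ _).trans ?_
    rw [abs_mul, abs_of_nonneg (sub_nonneg.mpr hst)]
  calc ∫ ω, |B t ω - B s ω| ∂P
      ≤ ∫ ω, (|W t ω - W s ω| + (t - s) * |W 1 ω|) ∂P := by
        apply integral_mono hint.abs (h1.1.abs.add (hW1.abs.const_mul (t - s))) hle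
    _ = (∫ ω, |W t ω - W s ω| ∂P) + (t - s) * ∫ ω, |W 1 ω| ∂P := by
        rw [integral_add h1.1.abs (hW1.abs.const_mul (t - s)), integral_const_mul]
    _ ≤ Real.sqrt (t - s) + (t - s) := by
        have := mul_le_mul_of_nonneg_left hW1abs (sub_nonneg.mpr hst)
        have h4 := h1'
        nlinarith

/-- There is a constant `C > 0` such that for every `N ≥ 1` and `ε > 0`,
`P(|M_N − M̃| > ε) ≤ (C N²/ε) 2^{−N/2}`, where (with `n = 2^N − 1`)
`M_N = max_{𝔍 ⊆ {1,…,N}} |∑_{m∈𝔍} (B_{(2^m−1)/n} − B_{(2^{m−1}−1)/n})|` and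
`M̃ = (1/2) ∑_{l=1}^∞ |B_{2^{−(l−1)}} − B_{2^{−l}}|`. In particular `M_N → M̃` in
distribution as `N → ∞`. -/
theorem binary_MN_tendsto_Mtilde
    {Ω : Type*} [MeasurableSpace Ω] (P : Measure Ω) [IsProbabilityMeasure P]
    (W : ℝ → Ω → ℝ) (hW : IsBrownianMotion P W)
    (B : ℝ → Ω → ℝ) (hB : ∀ t ω, B t ω = W t ω - t * W 1 ω)
    -- `M_N`: the maximum over all subsets `𝔍 ⊆ {1,…,N}` of the absolute sum of the
    -- corresponding block increments of the Brownian bridge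
    (MN : ℕ → Ω → ℝ)
    (hMN : ∀ N ω, MN N ω = ((Finset.range N).powerset).sup'
      ⟨∅, Finset.empty_mem_powerset _⟩
      fun S => |∑ m ∈ S, (B (((2 : ℝ) ^ (m + 1) - 1) / ((2 : ℝ) ^ N - 1)) ω
        - B (((2 : ℝ) ^ m - 1) / ((2 : ℝ) ^ N - 1)) ω)|)
    -- `M̃ = (1/2) ∑_{l=1}^∞ |B_{2^{−(l−1)}} − B_{2^{−l}}|`
    (Mt : Ω → ℝ)
    (hMt : ∀ ω, Mt ω = (1 / 2) *
      ∑' l : ℕ, |B ((2 : ℝ) ^ (-(l : ℝ))) ω - B ((2 : ℝ) ^ (-((l : ℝ) + 1))) ω|) :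
    (∃ C : ℝ, 0 < C ∧ ∀ N : ℕ, 1 ≤ N → ∀ ε : ℝ, 0 < ε →
        (P {ω | ε < |MN N ω - Mt ω|}).toReal
          ≤ C * (N : ℝ) ^ 2 / ε * (2 : ℝ) ^ (-(N : ℝ) / 2)) ∧
      ∀ f : BoundedContinuousFunction ℝ ℝ,
        Tendsto (fun N => ∫ ω, f (MN N ω) ∂P) atTop (𝓝 (∫ ω, f (Mt ω) ∂P)) := by
  -- basic numeric constants
  set w : ℝ := (Real.sqrt 2)⁻¹ with hwdef
  have hs2 : (1:ℝ) < Real.sqrt 2 := by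
    rw [show (1:ℝ) = Real.sqrt 1 from Real.sqrt_one.symm]
    exact Real.sqrt_lt_sqrt (by norm_num) (by norm_num)
  have hs22 : Real.sqrt 2 ≤ 2 := by
    nlinarith [Real.sq_sqrt (show (0:ℝ) ≤ 2 by norm_num), Real.sqrt_nonneg 2]
  have hw0 : 0 < w := by rw [hwdef]; positivity
  have hw1 : w < 1 := by rw [hwdef]; exact inv_lt_one_of_one_lt₀ hs2
  have hw34 : w ≤ 3/4 := by
    rw [hwdef]
    have h43 : (4/3:ℝ) ≤ Real.sqrt 2 := by
      rw [show (4/3:ℝ) = Real.sqrt ((4/3)^2) from (Real.sqrt_sq (by norm_num)).symm]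
      exact Real.sqrt_le_sqrt (by norm_num)
    calc (Real.sqrt 2)⁻¹ ≤ (4/3:ℝ)⁻¹ := inv_anti₀ (by norm_num) h43
      _ = 3/4 := by norm_num
  have hsqrtpow : ∀ k : ℕ, Real.sqrt ((2:ℝ)^k) = (Real.sqrt 2)^k := by
    intro k
    rw [show ((2:ℝ)^k) = ((Real.sqrt 2)^k)^2 from by
      rw [← pow_mul, mul_comm, pow_mul, Real.sq_sqrt (by norm_num : (0:ℝ) ≤ 2)],
      Real.sqrt_sq (pow_nonneg (Real.sqrt_nonneg 2) k)]
  have hwk : ∀ k : ℕ, Real.sqrt (((2:ℝ)^k)⁻¹) = w^k := by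
    intro k
    rw [Real.sqrt_inv, hsqrtpow k, hwdef, inv_pow]
  have hinvk : ∀ k : ℕ, ((2:ℝ)^k)⁻¹ ≤ w^k := by
    intro k
    calc ((2:ℝ)^k)⁻¹ = ((2:ℝ)⁻¹)^k := by rw [inv_pow]
      _ ≤ w^k := by
          apply pow_le_pow_left₀ (by norm_num)
          rw [hwdef]
          exact inv_anti₀ (by positivity) hs22
  have hrpow : ∀ n : ℕ, (2:ℝ) ^ (-(n:ℝ)/2) = w ^ n := by
    intro n
    have hw2 : w = (2:ℝ) ^ (-(1:ℝ)/2) := by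
      rw [hwdef, Real.sqrt_eq_rpow, ← Real.rpow_neg (by norm_num : (0:ℝ) ≤ 2)]
      norm_num
    rw [hw2, ← Real.rpow_natCast ((2:ℝ) ^ (-(1:ℝ)/2)) n, ← Real.rpow_mul (by norm_num)]
    congr 1
    ring
  -- the dyadic points u
  set u : ℕ → ℝ := fun k => (2:ℝ) ^ (-(k:ℝ)) with hudef
  have hu_inv : ∀ k : ℕ, u k = ((2:ℝ)^k)⁻¹ := by
    intro k
    rw [hudef]
    simp only
    rw [← Real.rpow_natCast 2 k, ← Real.rpow_neg (by norm_num : (0:ℝ) ≤ 2)]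
  have hu_pos : ∀ k, 0 < u k := fun k => by rw [hu_inv]; positivity
  have hu_gap : ∀ l : ℕ, u l - u (l+1) = u (l+1) := by
    intro l
    rw [hu_inv, hu_inv, pow_succ]
    have h2l : (0:ℝ) < 2^l := by positivity
    field_simp
    norm_num
  have hu_mono : ∀ l : ℕ, u (l+1) ≤ u l := by
    intro l
    have := hu_gap l
    have := hu_pos (l+1)
    linarith
  -- the increments Y
  set Y : ℕ → Ω → ℝ := fun l ω =>
    B ((2 : ℝ) ^ (-(l : ℝ))) ω - B ((2 : ℝ) ^ (-((l : ℝ) + 1))) ω with hYdef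
  have hYu : ∀ l ω, Y l ω = B (u l) ω - B (u (l+1)) ω := by
    intro l ω
    rw [hYdef, hudef]
    simp only
    congr 3
    push_cast
    ring
  have hBm : ∀ r : ℝ, Measurable (B r) := by
    intro r
    have hr : B r = fun ω => W r ω - r * W 1 ω := funext fun ω => hB r ω
    rw [hr]
    exact (hW.meas r).sub ((hW.meas 1).const_mul r)
  have hYm : ∀ l, Measurable (fun ω => |Y l ω|) := by
    intro l
    rw [hYdef]
    exact ((hBm _).sub (hBm _)).abs
  have hYint : ∀ l, Integrable (fun ω => |Y l ω|) P := by
    intro l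
    have h := (my_bridge_moment hW hB (hu_pos (l+1)).le (hu_mono l)).1.abs
    refine h.congr ?_
    filter_upwards with ω
    rw [hYu l ω]
  have hYle : ∀ l, ∫ ω, |Y l ω| ∂P ≤ 2 * w ^ l := by
    intro l
    have h := (my_bridge_moment hW hB (hu_pos (l+1)).le (hu_mono l)).2
    have heq : ∫ ω, |Y l ω| ∂P = ∫ ω, |B (u l) ω - B (u (l+1)) ω| ∂P := by
      apply integral_congr_ae
      filter_upwards with ω
      rw [hYu l ω]
    rw [heq]
    refine h.trans ?_
    rw [hu_gap l]
    have h1 : Real.sqrt (u (l+1)) = w^(l+1) := by rw [hu_inv]; exact hwk (l+1)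
    have h2 : u (l+1) ≤ w^(l+1) := by rw [hu_inv]; exact hinvk (l+1)
    have h3 : w^(l+1) ≤ w^l := by
      rw [pow_succ]
      nlinarith [pow_nonneg hw0.le l]
    linarith [h1 ▸ le_refl (Real.sqrt (u (l+1)))]
  -- the tails
  have htail : ∀ N : ℕ, (∀ᵐ ω ∂P, Summable fun j => |Y (N + j) ω|) ∧
      Integrable (fun ω => ∑' j, |Y (N + j) ω|) P ∧
      ∫ ω, (∑' j, |Y (N + j) ω|) ∂P ≤ 8 * w ^ N := by
    intro N
    have hgeo : Summable (fun j : ℕ => w ^ j) := summable_geometric_of_lt_one hw0.le hw1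
    have hcrw : (fun j : ℕ => 2 * w ^ (N + j)) = fun j : ℕ => (2 * w^N) * w^j := by
      funext j; rw [pow_add]; ring
    have hcs : Summable (fun j : ℕ => 2 * w ^ (N + j)) := by
      rw [hcrw]; exact hgeo.mul_left _
    obtain ⟨h1, h2, h3⟩ := my_tsum_integral (fun j => hYm (N+j)) (fun j ω => abs_nonneg _)
      (fun j => hYint (N+j)) (fun j => hYle (N+j)) hcs
    refine ⟨h1, h2, h3.trans ?_⟩
    have htsum : ∑' j : ℕ, 2 * w ^ (N + j) = (2 * w^N) * (1-w)⁻¹ := by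
      rw [hcrw, tsum_mul_left, tsum_geometric_of_lt_one hw0.le hw1]
    rw [htsum]
    have h14 : (1-w)⁻¹ ≤ 4 := by
      have h4 : (1:ℝ)/4 ≤ 1 - w := by linarith
      calc (1-w)⁻¹ ≤ ((1:ℝ)/4)⁻¹ := inv_anti₀ (by norm_num) h4
        _ = 4 := by norm_num
    nlinarith [pow_nonneg hw0.le N]
  have hsumae : ∀ᵐ ω ∂P, Summable fun l => |Y l ω| := by
    filter_upwards [(htail 0).1] with ω h
    simpa using h
  -- core estimate: a dominating integrable function for |MN N - Mt|
  have key : ∀ N : ℕ, 1 ≤ N → ∃ F : Ω → ℝ, Integrable F P ∧ (∀ ω, 0 ≤ F ω) ∧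
      (∀ᵐ ω ∂P, |MN N ω - Mt ω| ≤ F ω) ∧ ∫ ω, F ω ∂P ≤ 8 * N * w ^ N := by
    intro N hN
    set tt : ℕ → ℝ := fun k => ((2:ℝ)^k - 1)/((2:ℝ)^N - 1) with httdef
    have h2N : (2:ℝ) ≤ (2:ℝ)^N := by
      calc (2:ℝ) = 2^1 := (pow_one 2).symm
        _ ≤ 2^N := pow_le_pow_right₀ (by norm_num) hN
    have hden : (0:ℝ) < (2:ℝ)^N - 1 := by linarith
    have htu : ∀ m : ℕ, m ≤ N → 0 ≤ tt m ∧ tt m ≤ u (N - m) ∧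
        u (N - m) - tt m ≤ 2 * ((2:ℝ)^N)⁻¹ := by
      intro m hm
      have he : (1:ℝ) ≤ (2:ℝ)^m := by
        calc (1:ℝ) = 1^m := (one_pow m).symm
          _ ≤ 2^m := pow_le_pow_left₀ (by norm_num) (by norm_num) m
      have hed : (2:ℝ)^m ≤ 2^N := pow_le_pow_right₀ (by norm_num) hm
      have humrw : u (N - m) = (2:ℝ)^m / (2:ℝ)^N := by
        rw [hu_inv]
        obtain ⟨k, hk⟩ : ∃ k, N = m + k := ⟨N - m, by omega⟩
        subst hk
        rw [show m + k - m = k from by omega, pow_add]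
        have : (0:ℝ) < 2^m := by positivity
        have : (0:ℝ) < 2^k := by positivity
        field_simp
      refine ⟨div_nonneg (by linarith) hden.le, ?_, ?_⟩
      · rw [humrw, httdef]
        simp only
        rw [div_le_div_iff₀ hden (by positivity)]
        nlinarith
      · rw [humrw, httdef]
        simp only
        have hkey2 : (2:ℝ)^m/(2:ℝ)^N - ((2:ℝ)^m-1)/((2:ℝ)^N-1)
            = ((2:ℝ)^N - (2:ℝ)^m)/((2:ℝ)^N * ((2:ℝ)^N - 1)) := by
          field_simp
          ring
        rw [hkey2, div_le_iff₀ (by positivity)]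
        have hinv : ((2:ℝ)^N)⁻¹ * (2:ℝ)^N = 1 := inv_mul_cancel₀ (by positivity)
        nlinarith
    have hEbound : ∀ a b : ℝ, 0 ≤ a → a ≤ b → b - a ≤ 2 * ((2:ℝ)^N)⁻¹ →
        Integrable (fun ω => |B b ω - B a ω|) P ∧
          ∫ ω, |B b ω - B a ω| ∂P ≤ 4 * w ^ N := by
      intro a b ha hab hgap
      obtain ⟨hI, hE⟩ := my_bridge_moment hW hB ha hab
      refine ⟨hI.abs, hE.trans ?_⟩
      have h1 : Real.sqrt (b - a) ≤ Real.sqrt (2 * ((2:ℝ)^N)⁻¹) := Real.sqrt_le_sqrt hgap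
      have h2 : Real.sqrt (2 * ((2:ℝ)^N)⁻¹) = Real.sqrt 2 * w^N := by
        rw [Real.sqrt_mul (by norm_num), hwk]
      have h4 : (2:ℝ) * ((2:ℝ)^N)⁻¹ ≤ 2 * w^N := by nlinarith [hinvk N]
      nlinarith [pow_nonneg hw0.le N, hs22, Real.sqrt_nonneg (b - a)]
    -- the dominating function
    have hD1 : ∀ m, m < N → Integrable (fun ω => |B (u (N-1-m)) ω - B (tt (m+1)) ω|) P ∧
        ∫ ω, |B (u (N-1-m)) ω - B (tt (m+1)) ω| ∂P ≤ 4 * w ^ N := by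
      intro m hm
      obtain ⟨ha, hb, hc⟩ := htu (m+1) (by omega)
      rw [show N - (m+1) = N - 1 - m from by omega] at hb hc
      exact hEbound _ _ ha hb hc
    have hD2 : ∀ m, m < N → Integrable (fun ω => |B (u (N-m)) ω - B (tt m) ω|) P ∧
        ∫ ω, |B (u (N-m)) ω - B (tt m) ω| ∂P ≤ 4 * w ^ N := by
      intro m hm
      obtain ⟨ha, hb, hc⟩ := htu m (by omega)
      exact hEbound _ _ ha hb hc
    refine ⟨fun ω => (1/2) * ((∑ m ∈ Finset.range N,
        (|B (u (N-1-m)) ω - B (tt (m+1)) ω| + |B (u (N-m)) ω - B (tt m) ω|))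
        + ∑' j, |Y (N + j) ω|), ?_, ?_, ?_, ?_⟩
    · apply Integrable.const_mul
      refine Integrable.add ?_ (htail N).2.1
      apply integrable_finset_sum
      intro m hm
      rw [Finset.mem_range] at hm
      exact ((hD1 m hm).1).add ((hD2 m hm).1)
    · intro ω
      apply mul_nonneg (by norm_num)
      apply add_nonneg
      · apply Finset.sum_nonneg
        intro m _
        positivity
      · exact tsum_nonneg fun j => abs_nonneg _
    · -- the a.e. pointwise bound
      filter_upwards [hW.init, hsumae] with ω hω0 hωs
      -- the identity for MN N
      have httN : tt N = 1 := by rw [httdef]; exact div_self hden.ne'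
      have htt0 : tt 0 = 0 := by rw [httdef]; simp
      have hB1 : B 1 ω = 0 := by rw [hB]; rw [one_mul, sub_self]
      have hB0 : B 0 ω = 0 := by rw [hB]; simp [hω0]
      have h0 : ∑ m ∈ Finset.range N, (B (tt (m+1)) ω - B (tt m) ω) = 0 := by
        rw [Finset.sum_range_sub (fun m => B (tt m) ω) N, httN, htt0, hB1, hB0, sub_zero]
      have hMNeq : MN N ω = (1/2) * ∑ m ∈ Finset.range N,
          |B (tt (m+1)) ω - B (tt m) ω| := by
        rw [hMN N ω]
        exact my_sup'_powerset (fun m => B (tt (m+1)) ω - B (tt m) ω) h0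
      -- the split for Mt
      have hMteq : Mt ω = (1/2) * ((∑ l ∈ Finset.range N, |Y l ω|)
          + ∑' j, |Y (N + j) ω|) := by
        rw [hMt ω]
        congr 1
        calc ∑' l : ℕ, |B ((2:ℝ) ^ (-(l:ℝ))) ω - B ((2:ℝ) ^ (-((l:ℝ) + 1))) ω|
            = ∑' l : ℕ, |Y l ω| := by rw [hYdef]
          _ = (∑ l ∈ Finset.range N, |Y l ω|) + ∑' j, |Y (j + N) ω| :=
              (Summable.sum_add_tsum_nat_add N hωs).symm
          _ = (∑ l ∈ Finset.range N, |Y l ω|) + ∑' j, |Y (N + j) ω| := by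
              congr 1
              exact tsum_congr fun j => by rw [add_comm]
      -- termwise comparison
      have hterm : ∀ m ∈ Finset.range N,
          abs (|B (tt (m+1)) ω - B (tt m) ω| - |Y (N - 1 - m) ω|)
            ≤ |B (u (N-1-m)) ω - B (tt (m+1)) ω| + |B (u (N-m)) ω - B (tt m) ω| := by
        intro m hm
        rw [Finset.mem_range] at hm
        have hidx : N - 1 - m + 1 = N - m := by omega
        have hYv : Y (N-1-m) ω = B (u (N-1-m)) ω - B (u (N-m)) ω := by
          rw [hYu]; rw [hidx]
        refine (abs_abs_sub_abs_le_abs_sub _ _).trans ?_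
        rw [hYv]
        have hrearr : B (tt (m+1)) ω - B (tt m) ω - (B (u (N-1-m)) ω - B (u (N-m)) ω)
            = -((B (u (N-1-m)) ω - B (tt (m+1)) ω) - (B (u (N-m)) ω - B (tt m) ω)) := by
          ring
        rw [hrearr, abs_neg]
        exact abs_sub _ _
      have hreflect : ∑ l ∈ Finset.range N, |Y l ω|
          = ∑ m ∈ Finset.range N, |Y (N - 1 - m) ω| :=
        (Finset.sum_range_reflect (fun l => |Y l ω|) N).symm
      have hmid : abs ((∑ m ∈ Finset.range N, |B (tt (m+1)) ω - B (tt m) ω|)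
          - ∑ l ∈ Finset.range N, |Y l ω|)
          ≤ ∑ m ∈ Finset.range N, (|B (u (N-1-m)) ω - B (tt (m+1)) ω|
            + |B (u (N-m)) ω - B (tt m) ω|) := by
        rw [hreflect, ← Finset.sum_sub_distrib]
        refine (Finset.abs_sum_le_sum_abs _ _).trans ?_
        exact Finset.sum_le_sum hterm
      have htailnn : 0 ≤ ∑' j, |Y (N + j) ω| := tsum_nonneg fun j => abs_nonneg _
      rw [hMNeq, hMteq, ← mul_sub, abs_mul]
      rw [show |(1:ℝ)/2| = 1/2 from abs_of_pos (by norm_num)]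
      apply mul_le_mul_of_nonneg_left _ (by norm_num : (0:ℝ) ≤ 1/2)
      calc abs ((∑ m ∈ Finset.range N, |B (tt (m+1)) ω - B (tt m) ω|)
            - ((∑ l ∈ Finset.range N, |Y l ω|) + ∑' j, |Y (N + j) ω|))
          ≤ abs ((∑ m ∈ Finset.range N, |B (tt (m+1)) ω - B (tt m) ω|)
            - ∑ l ∈ Finset.range N, |Y l ω|) + ∑' j, |Y (N + j) ω| := by
            rw [show (∑ m ∈ Finset.range N, |B (tt (m+1)) ω - B (tt m) ω|)
              - ((∑ l ∈ Finset.range N, |Y l ω|) + ∑' j, |Y (N + j) ω|)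
              = ((∑ m ∈ Finset.range N, |B (tt (m+1)) ω - B (tt m) ω|)
              - ∑ l ∈ Finset.range N, |Y l ω|) - ∑' j, |Y (N + j) ω| from by ring]
            refine (abs_sub _ _).trans ?_
            rw [abs_of_nonneg htailnn]
        _ ≤ _ := by
            apply add_le_add_left hmid
    · -- the integral bound
      have hsumI : Integrable (fun ω => ∑ m ∈ Finset.range N,
          (|B (u (N-1-m)) ω - B (tt (m+1)) ω| + |B (u (N-m)) ω - B (tt m) ω|)) P := by
        apply integrable_finset_sum
        intro m hm
        rw [Finset.mem_range] at hm
        exact ((hD1 m hm).1).add ((hD2 m hm).1)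
      have hIm : ∀ m ∈ Finset.range N, Integrable (fun ω =>
          |B (u (N-1-m)) ω - B (tt (m+1)) ω| + |B (u (N-m)) ω - B (tt m) ω|) P :=
        fun m hm => ((hD1 m (Finset.mem_range.mp hm)).1).add
          ((hD2 m (Finset.mem_range.mp hm)).1)
      rw [integral_const_mul, integral_add hsumI (htail N).2.1,
        integral_finset_sum _ hIm]
      have hsumle : ∑ m ∈ Finset.range N, (∫ ω, (|B (u (N-1-m)) ω - B (tt (m+1)) ω|
          + |B (u (N-m)) ω - B (tt m) ω|) ∂P) ≤ N * (8 * w ^ N) := by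
        have hcard : (N : ℝ) * (8 * w ^ N) = ∑ _m ∈ Finset.range N, 8 * w ^ N := by
          rw [Finset.sum_const, Finset.card_range, nsmul_eq_mul]
        rw [hcard]
        apply Finset.sum_le_sum
        intro m hm
        rw [Finset.mem_range] at hm
        rw [integral_add (hD1 m hm).1 (hD2 m hm).1]
        linarith [(hD1 m hm).2, (hD2 m hm).2]
      have htb := (htail N).2.2
      have hN1 : (1:ℝ) ≤ N := by exact_mod_cast hN
      nlinarith [pow_nonneg hw0.le N, mul_le_mul_of_nonneg_right hN1
        (mul_nonneg (by norm_num : (0:ℝ) ≤ 8) (pow_nonneg hw0.le N))]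
  -- measurability of MN
  have hMNm : ∀ N, Measurable (MN N) := by
    intro N
    have hrepr : MN N = ((Finset.range N).powerset).sup' ⟨∅, Finset.empty_mem_powerset _⟩
        (fun S ω => |∑ m ∈ S, (B (((2:ℝ)^(m+1) - 1)/((2:ℝ)^N - 1)) ω
          - B (((2:ℝ)^m - 1)/((2:ℝ)^N - 1)) ω)|) := by
      funext ω
      rw [hMN N ω]
      exact (Finset.sup'_apply (C := fun _ : Ω => ℝ) _ (fun S ω => |∑ m ∈ S, (B (((2:ℝ)^(m+1) - 1)/((2:ℝ)^N - 1)) ω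
        - B (((2:ℝ)^m - 1)/((2:ℝ)^N - 1)) ω)|) ω).symm
    rw [hrepr]
    apply Finset.measurable_sup'
    intro S _
    apply Measurable.abs
    apply Finset.measurable_sum
    intro m _
    exact (hBm _).sub (hBm _)
  -- part 1
  have hP1 : ∀ N : ℕ, 1 ≤ N → ∀ ε : ℝ, 0 < ε →
      (P {ω | ε < |MN N ω - Mt ω|}).toReal
        ≤ 8 * (N : ℝ) ^ 2 / ε * (2 : ℝ) ^ (-(N : ℝ) / 2) := by
    intro N hN ε hε
    obtain ⟨F, hFint, hFnn, hFae, hFE⟩ := key N hN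
    have hsub : P {ω | ε < |MN N ω - Mt ω|} ≤ P {ω | ε ≤ F ω} := by
      apply measure_mono_ae
      filter_upwards [hFae] with ω h1 h2
      exact le_trans (le_of_lt h2) h1
    have hmarkov := mul_meas_ge_le_integral_of_nonneg (ae_of_all _ hFnn) hFint ε
    have htoReal : (P {ω | ε < |MN N ω - Mt ω|}).toReal ≤ (P {ω | ε ≤ F ω}).toReal :=
      ENNReal.toReal_mono (measure_ne_top _ _) hsub
    have hN1 : (1:ℝ) ≤ N := by exact_mod_cast hN
    have hNle : 8 * (N:ℝ) * w^N ≤ 8 * (N:ℝ)^2 * w^N :=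
      mul_le_mul_of_nonneg_right (by nlinarith : 8*(N:ℝ) ≤ 8*(N:ℝ)^2)
        (pow_nonneg hw0.le N)
    rw [hrpow N]
    rw [div_mul_eq_mul_div, le_div_iff₀ hε]
    calc (P {ω | ε < |MN N ω - Mt ω|}).toReal * ε
        = ε * (P {ω | ε < |MN N ω - Mt ω|}).toReal := by ring
      _ ≤ ε * (P {ω | ε ≤ F ω}).toReal := by
          apply mul_le_mul_of_nonneg_left htoReal hε.le
      _ ≤ ∫ ω, F ω ∂P := hmarkov
      _ ≤ 8 * (N:ℝ) * w^N := hFE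
      _ ≤ 8 * (N:ℝ)^2 * w^N := hNle
  refine ⟨⟨8, by norm_num, hP1⟩, ?_⟩
  -- part 2: convergence in distribution
  have hTIM : TendstoInMeasure P MN atTop Mt := by
    rw [tendstoInMeasure_iff_dist]
    intro ε hε
    have hub : ∀ N : ℕ, 1 ≤ N → P {ω | ε ≤ dist (MN N ω) (Mt ω)}
        ≤ ENNReal.ofReal (8 * (N:ℝ)^2 / (ε/2) * (2:ℝ) ^ (-(N:ℝ)/2)) := by
      intro N hN
      have hss : {ω | ε ≤ dist (MN N ω) (Mt ω)} ⊆ {ω | ε/2 < |MN N ω - Mt ω|} := by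
        intro ω h
        simp only [Set.mem_setOf_eq, Real.dist_eq] at h ⊢
        linarith
      calc P {ω | ε ≤ dist (MN N ω) (Mt ω)}
          ≤ P {ω | ε/2 < |MN N ω - Mt ω|} := measure_mono hss
        _ = ENNReal.ofReal ((P {ω | ε/2 < |MN N ω - Mt ω|}).toReal) :=
            (ENNReal.ofReal_toReal (measure_ne_top _ _)).symm
        _ ≤ _ := ENNReal.ofReal_le_ofReal (hP1 N hN (ε/2) (by linarith))
    have hup : Tendsto (fun N : ℕ =>
        ENNReal.ofReal (8 * (N:ℝ)^2 / (ε/2) * (2:ℝ) ^ (-(N:ℝ)/2))) atTop (𝓝 0) := by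
      have h1 : Tendsto (fun N : ℕ => 8 / (ε/2) * ((N:ℝ)^2 * w^N)) atTop (𝓝 0) := by
        have := (tendsto_pow_const_mul_const_pow_of_lt_one 2 hw0.le hw1).const_mul
          (8 / (ε/2))
        simpa using this
      have h2 : Tendsto (fun N : ℕ => 8 * (N:ℝ)^2 / (ε/2) * (2:ℝ) ^ (-(N:ℝ)/2))
          atTop (𝓝 0) := by
        refine h1.congr fun N => ?_
        rw [hrpow N]
        ring
      have := ENNReal.tendsto_ofReal h2
      simpa using this
    have hlow : ∀ N : ℕ, (0:ℝ≥0∞) ≤ P {ω | ε ≤ dist (MN N ω) (Mt ω)} := fun _ => zero_le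
    apply tendsto_of_tendsto_of_tendsto_of_le_of_le' tendsto_const_nhds hup
    · exact Filter.Eventually.of_forall hlow
    · filter_upwards [Filter.eventually_ge_atTop 1] with N hN
      exact hub N hN
  intro f
  apply Filter.tendsto_of_subseq_tendsto
  intro ns hns
  have hsub : TendstoInMeasure P (fun i => MN (ns i)) atTop Mt :=
    fun ε hε => (hTIM ε hε).comp hns
  obtain ⟨ms, _, hmsae⟩ := hsub.exists_seq_tendsto_ae
  refine ⟨ms, ?_⟩
  apply tendsto_integral_of_dominated_convergence (fun _ => ‖f‖)
  · intro n
    exact (f.continuous.measurable.comp (hMNm _)).aestronglyMeasurable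
  · exact integrable_const _
  · intro n
    exact ae_of_all _ fun ω => f.norm_coe_le_norm _
  · filter_upwards [hmsae] with ω hω
    exact (f.continuous.tendsto _).comp hω
end
end

section
/- Let ρ ∈ [−1, 1], let Z₁ and Z₂ be independent standard normal random variables, and set Y₁ = Z₁ and Y₂ = ρ Z₁ + √(1 − ρ²) Z₂ (so that (Y₁, Y₂) is a bivariate standard normal pair with correlation ρ). Then E[ |Y₁| · |Y₂| ] = (2/π) · ( √(1 − ρ²) + ρ · arcsin(ρ) ). -/
open MeasureTheory ProbabilityTheory Filter
open scoped NNReal ENNReal Topology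

noncomputable section

open Real intervalIntegral in
private lemma epabn_lin_int (ρ a b : ℝ) :
    ∫ u in a..b, (ρ + Real.cos u) = ρ * (b - a) + (Real.sin b - Real.sin a) := by
  rw [intervalIntegral.integral_add intervalIntegrable_const
    (Real.continuous_cos.intervalIntegrable a b), intervalIntegral.integral_const,
    integral_cos]
  simp [smul_eq_mul, mul_comm]

open Real in
private lemma epabn_M_int (ρ : ℝ) (hρ : ρ ∈ Set.Icc (-1:ℝ) 1) :
    ∫ u in (0:ℝ)..(2*π), |ρ + Real.cos u|
      = 4 * Real.sqrt (1 - ρ ^ 2) + 4 * ρ * Real.arcsin ρ := by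
  obtain ⟨h1, h2⟩ := hρ
  set s := Real.sqrt (1 - ρ ^ 2) with hs
  set β := Real.arccos (-ρ) with hβ
  have hcosβ : Real.cos β = -ρ := Real.cos_arccos (by linarith) (by linarith)
  have hsinβ : Real.sin β = s := by
    rw [hβ, Real.sin_arccos, neg_pow]; norm_num; exact hs.symm
  have hβ0 : 0 ≤ β := Real.arccos_nonneg _
  have hβπ : β ≤ π := Real.arccos_le_pi _
  have hπ : (0:ℝ) < π := Real.pi_pos
  have hI : ∀ a b : ℝ, IntervalIntegrable (fun u => |ρ + Real.cos u|) volume a b :=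
    fun a b => (Continuous.abs (by continuity)).intervalIntegrable a b
  have split : ∫ u in (0:ℝ)..(2*π), |ρ + Real.cos u|
      = (∫ u in (0:ℝ)..β, |ρ + Real.cos u|) + (∫ u in β..π, |ρ + Real.cos u|)
        + (∫ u in π..(2*π - β), |ρ + Real.cos u|) + (∫ u in (2*π - β)..(2*π), |ρ + Real.cos u|) := by
    have e1 := intervalIntegral.integral_add_adjacent_intervals (hI 0 β) (hI β (2*π))
    have e2 := intervalIntegral.integral_add_adjacent_intervals (hI β π) (hI π (2*π))
    have e3 := intervalIntegral.integral_add_adjacent_intervals (hI π (2*π - β)) (hI (2*π - β) (2*π))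
    linarith
  have cos2pi_sub : ∀ u : ℝ, Real.cos (2*π - u) = Real.cos u := by
    intro u; rw [Real.cos_sub]; simp
  have p1 : ∫ u in (0:ℝ)..β, |ρ + Real.cos u| = ∫ u in (0:ℝ)..β, (ρ + Real.cos u) := by
    apply intervalIntegral.integral_congr
    intro u hu
    rw [Set.uIcc_of_le hβ0] at hu
    have : Real.cos β ≤ Real.cos u := Real.cos_le_cos_of_nonneg_of_le_pi hu.1 hβπ hu.2
    rw [hcosβ] at this
    exact abs_of_nonneg (by linarith)
  have p2 : ∫ u in β..π, |ρ + Real.cos u| = ∫ u in β..π, -(ρ + Real.cos u) := by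
    apply intervalIntegral.integral_congr
    intro u hu
    rw [Set.uIcc_of_le hβπ] at hu
    have : Real.cos u ≤ Real.cos β := Real.cos_le_cos_of_nonneg_of_le_pi hβ0 hu.2 hu.1
    rw [hcosβ] at this
    exact abs_of_nonpos (by linarith)
  have p3 : ∫ u in π..(2*π - β), |ρ + Real.cos u| = ∫ u in π..(2*π - β), -(ρ + Real.cos u) := by
    apply intervalIntegral.integral_congr
    intro u hu
    rw [Set.uIcc_of_le (by linarith)] at hu
    have h3 : Real.cos u ≤ Real.cos β := by
      rw [← cos2pi_sub u]
      exact Real.cos_le_cos_of_nonneg_of_le_pi hβ0 (by linarith [hu.1]) (by linarith [hu.2])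
    rw [hcosβ] at h3
    exact abs_of_nonpos (by linarith)
  have p4 : ∫ u in (2*π - β)..(2*π), |ρ + Real.cos u| = ∫ u in (2*π - β)..(2*π), (ρ + Real.cos u) := by
    apply intervalIntegral.integral_congr
    intro u hu
    rw [Set.uIcc_of_le (by linarith)] at hu
    have h3 : Real.cos β ≤ Real.cos u := by
      rw [← cos2pi_sub u]
      exact Real.cos_le_cos_of_nonneg_of_le_pi (by linarith [hu.2]) hβπ (by linarith [hu.1])
    rw [hcosβ] at h3
    exact abs_of_nonneg (by linarith)
  have sin2πβ : Real.sin (2*π - β) = -s := by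
    rw [Real.sin_sub]; simp [hsinβ]
  have negint : ∀ a b : ℝ, ∫ u in a..b, -(ρ + Real.cos u)
      = -(ρ * (b - a) + (Real.sin b - Real.sin a)) := by
    intro a b
    rw [intervalIntegral.integral_neg, epabn_lin_int]
  have hβval : β = π - Real.arccos ρ := Real.arccos_neg ρ
  have harcsin : Real.arcsin ρ = π/2 - Real.arccos ρ := by
    rw [Real.arccos]; ring
  rw [split, p1, p2, p3, p4, epabn_lin_int, epabn_lin_int, negint, negint, sin2πβ, hsinβ]
  simp only [Real.sin_pi, Real.sin_zero, Real.sin_two_pi]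
  rw [hβval, harcsin]
  ring

open Real in
private lemma epabn_T_int (ρ : ℝ) (hρ : ρ ∈ Set.Icc (-1:ℝ) 1) :
    ∫ θ in (-π)..π, |Real.cos θ| * |ρ * Real.cos θ + Real.sqrt (1 - ρ ^ 2) * Real.sin θ|
      = 2 * (Real.sqrt (1 - ρ ^ 2) + ρ * Real.arcsin ρ) := by
  obtain ⟨h1, h2⟩ := hρ
  set s := Real.sqrt (1 - ρ ^ 2) with hs
  set α := Real.arccos ρ with hα
  have hcosα : Real.cos α = ρ := Real.cos_arccos h1 h2
  have hsinα : Real.sin α = s := Real.sin_arccos ρ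
  have point : ∀ θ : ℝ, |Real.cos θ| * |ρ * Real.cos θ + s * Real.sin θ|
      = |ρ + Real.cos (2 * θ - α)| / 2 := by
    intro θ
    rw [← abs_mul]
    have key : Real.cos θ * (ρ * Real.cos θ + s * Real.sin θ)
        = (ρ + Real.cos (2 * θ - α)) / 2 := by
      rw [Real.cos_sub, hcosα, hsinα, Real.cos_two_mul, Real.sin_two_mul]
      ring
    rw [key, abs_div, abs_two]
  have step1 : ∫ θ in (-π)..π, |Real.cos θ| * |ρ * Real.cos θ + s * Real.sin θ|
      = (∫ θ in (-π)..π, |ρ + Real.cos (2 * θ - α)|) / 2 := by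
    rw [← intervalIntegral.integral_div]
    exact intervalIntegral.integral_congr (fun θ _ => point θ)
  have per : Function.Periodic (fun u : ℝ => |ρ + Real.cos u|) (2*π) := by
    intro x
    simp [Real.cos_periodic x]
  have step2 : ∫ θ in (-π)..π, |ρ + Real.cos (2 * θ - α)|
      = (2:ℝ)⁻¹ • ∫ u in (2*(-π) - α)..(2*π - α), |ρ + Real.cos u| :=
    intervalIntegral.integral_comp_mul_sub (fun u => |ρ + Real.cos u|) two_ne_zero α
  have hI : ∀ a b : ℝ, IntervalIntegrable (fun u => |ρ + Real.cos u|) volume a b :=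
    fun a b => (Continuous.abs (by continuity)).intervalIntegrable a b
  have step3 : ∫ u in (2*(-π) - α)..(2*π - α), |ρ + Real.cos u|
      = 2 * ∫ u in (0:ℝ)..(2*π), |ρ + Real.cos u| := by
    have e1 : ∫ u in (2*(-π) - α)..((2*(-π) - α) + 2*π), |ρ + Real.cos u|
        = ∫ u in (0:ℝ)..(0 + 2*π), |ρ + Real.cos u| := per.intervalIntegral_add_eq _ 0
    have e2 : ∫ u in (-α)..((-α) + 2*π), |ρ + Real.cos u|
        = ∫ u in (0:ℝ)..(0 + 2*π), |ρ + Real.cos u| := per.intervalIntegral_add_eq _ 0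
    have hadj := intervalIntegral.integral_add_adjacent_intervals
      (hI (2*(-π) - α) (-α)) (hI (-α) (2*π - α))
    have hx1 : (2*(-π) - α) + 2*π = -α := by ring
    have hx2 : (-α) + 2*π = 2*π - α := by ring
    rw [hx1] at e1
    rw [hx2] at e2
    rw [← hadj, e1, e2]
    simp
    ring
  rw [step1, step2, step3, epabn_M_int ρ ⟨h1, h2⟩]
  have harcsin : Real.arcsin ρ = π/2 - Real.arccos ρ := by rw [Real.arccos]; ring
  rw [smul_eq_mul]
  ring

open Real in
private lemma epabn_L1 : ∫ r in Set.Ioi (0:ℝ), r ^ 3 * Real.exp (-(r ^ 2) / 2) = 2 := by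
  have key : ∫ r in Set.Ioi (0:ℝ), r ^ 3 * Real.exp (-(r ^ 2) / 2)
      = 0 - (-(0 ^ 2 + 2) * Real.exp (-(0 ^ 2) / 2)) := by
    apply integral_Ioi_of_hasDerivAt_of_nonneg
      (g := fun r : ℝ => -(r ^ 2 + 2) * Real.exp (-(r ^ 2) / 2)) (a := 0)
    · exact (Continuous.continuousWithinAt (by continuity))
    · intro x hx
      have : HasDerivAt (fun r : ℝ => -(r ^ 2 + 2) * Real.exp (-(r ^ 2) / 2))
          (x ^ 3 * Real.exp (-(x ^ 2) / 2)) x := by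
        have h1 : HasDerivAt (fun r : ℝ => -(r ^ 2 + 2)) (-(2 * x)) x := by
          exact (((hasDerivAt_pow 2 x).add_const 2).neg).congr_deriv (by norm_num)
        have h2 : HasDerivAt (fun r : ℝ => Real.exp (-(r ^ 2) / 2))
            (-x * Real.exp (-(x ^ 2) / 2)) x := by
          have h3 : HasDerivAt (fun r : ℝ => -(r ^ 2) / 2) (-x) x := by
            have h4 := ((hasDerivAt_pow 2 x).neg.div_const 2)
            refine h4.congr_deriv ?_
            ring
          simpa [mul_comm] using h3.exp
        have := h1.mul h2
        refine this.congr_deriv ?_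
        ring
      exact this
    · intro x hx
      have : (0:ℝ) < x := hx
      positivity
    · have h : Tendsto (fun y : ℝ => -2 * ((y + 1) * Real.exp (-y))) atTop (nhds 0) := by
        have : Tendsto (fun y : ℝ => (y + 1) * Real.exp (-y)) atTop (nhds 0) := by
          have h1 := Real.tendsto_pow_mul_exp_neg_atTop_nhds_zero 1
          have h2 : Tendsto (fun y : ℝ => Real.exp (-y)) atTop (nhds 0) :=
            Real.tendsto_exp_neg_atTop_nhds_zero
          have h3 : Tendsto (fun y : ℝ => y ^ 1 * Real.exp (-y) + Real.exp (-y)) atTop (nhds 0) := by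
            simpa using h1.add h2
          refine h3.congr (fun y => by ring)
        simpa using this.const_mul (-2 : ℝ)
      have h2 : Tendsto (fun r : ℝ => r ^ 2 / 2) atTop atTop := by
        exact (tendsto_pow_atTop two_ne_zero).atTop_div_const two_pos
      have := h.comp h2
      convert this using 2 with r
      simp only [Function.comp]
      ring_nf
  simpa using key

private lemma epabn_polar_symm (p : ℝ × ℝ) :
    polarCoord.symm p = (p.1 * Real.cos p.2, p.1 * Real.sin p.2) := rfl

private lemma epabn_gauss_prod :
    (gaussianReal 0 1).prod (gaussianReal 0 1)
      = ((volume : Measure ℝ).prod volume).withDensity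
          (fun p => gaussianPDF 0 1 p.1 * gaussianPDF 0 1 p.2) := by
  have key : (gaussianReal 0 1).prod (gaussianReal 0 1)
      = ((volume : Measure ℝ).prod volume).withDensity
        (fun p => gaussianPDF 0 1 p.1 * gaussianPDF 0 1 p.2) := by
    refine Measure.prod_eq fun s t hs ht => ?_
    rw [withDensity_apply _ (hs.prod ht), ← Measure.prod_restrict,
      lintegral_prod_mul ((measurable_gaussianPDF 0 1).aemeasurable.mono_measure
        Measure.restrict_le_self)
      ((measurable_gaussianPDF 0 1).aemeasurable.mono_measure Measure.restrict_le_self),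
      gaussianReal_apply _ one_ne_zero s, gaussianReal_apply _ one_ne_zero t]
  exact key

/-- **The expected product of absolute values of bivariate normals.** If `Z₁, Z₂` are
independent standard normals, `ρ ∈ [−1,1]`, `Y₁ = Z₁` and `Y₂ = ρ Z₁ + √(1−ρ²) Z₂`, then
`E[|Y₁|·|Y₂|] = (2/π)(√(1−ρ²) + ρ·arcsin ρ)`. -/
theorem expected_product_abs_bivariate_normal
    {Ω : Type*} [MeasurableSpace Ω] (P : Measure Ω) [IsProbabilityMeasure P]
    (ρ : ℝ) (hρ : ρ ∈ Set.Icc (-1 : ℝ) 1)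
    (Z₁ Z₂ : Ω → ℝ)
    (hZ₁ : Measure.map Z₁ P = gaussianReal 0 1)
    (hZ₂ : Measure.map Z₂ P = gaussianReal 0 1)
    (hindep : IndepFun Z₁ Z₂ P)
    (Y₁ Y₂ : Ω → ℝ)
    (hY₁ : ∀ ω, Y₁ ω = Z₁ ω)
    (hY₂ : ∀ ω, Y₂ ω = ρ * Z₁ ω + Real.sqrt (1 - ρ ^ 2) * Z₂ ω) :
    ∫ ω, |Y₁ ω| * |Y₂ ω| ∂P
      = 2 / Real.pi * (Real.sqrt (1 - ρ ^ 2) + ρ * Real.arcsin ρ) := by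
  have hπ : (0:ℝ) < Real.pi := Real.pi_pos
  set s := Real.sqrt (1 - ρ ^ 2) with hsdef
  set F : ℝ × ℝ → ℝ := fun p => |p.1| * |ρ * p.1 + s * p.2| with hFdef
  have hFc : Continuous F := by
    apply Continuous.mul
    · exact continuous_fst.abs
    · exact ((continuous_const.mul continuous_fst).add
        (continuous_const.mul continuous_snd)).abs
  have e0 : ∫ ω, |Y₁ ω| * |Y₂ ω| ∂P = ∫ ω, F (Z₁ ω, Z₂ ω) ∂P := by
    refine integral_congr_ae (Filter.Eventually.of_forall fun ω => ?_)
    show |Y₁ ω| * |Y₂ ω| = F (Z₁ ω, Z₂ ω)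
    simp only [hFdef]
    rw [hY₁, hY₂]
  have hZ₁m : AEMeasurable Z₁ P := by
    by_contra hc
    have h0 := Measure.map_of_not_aemeasurable hc
    rw [hZ₁] at h0
    exact (IsProbabilityMeasure.ne_zero (gaussianReal 0 1)) h0
  have hZ₂m : AEMeasurable Z₂ P := by
    by_contra hc
    have h0 := Measure.map_of_not_aemeasurable hc
    rw [hZ₂] at h0
    exact (IsProbabilityMeasure.ne_zero (gaussianReal 0 1)) h0
  have hpair : AEMeasurable (fun ω => (Z₁ ω, Z₂ ω)) P := hZ₁m.prodMk hZ₂m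
  have hmap : P.map (fun ω => (Z₁ ω, Z₂ ω)) = (gaussianReal 0 1).prod (gaussianReal 0 1) := by
    have h := (indepFun_iff_map_prod_eq_prod_map_map hZ₁m hZ₂m).mp hindep
    rw [hZ₁, hZ₂] at h
    exact h
  have e1 : ∫ ω, F (Z₁ ω, Z₂ ω) ∂P
      = ∫ p, F p ∂((gaussianReal 0 1).prod (gaussianReal 0 1)) := by
    rw [← hmap, integral_map hpair hFc.aestronglyMeasurable]
  -- convert to Lebesgue with density
  have hpdf_nn : ∀ x : ℝ, 0 ≤ gaussianPDFReal 0 1 x := fun x => gaussianPDFReal_nonneg 0 1 x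
  have hcast : (fun p : ℝ × ℝ => gaussianPDF 0 1 p.1 * gaussianPDF 0 1 p.2)
      = fun p : ℝ × ℝ => (((gaussianPDFReal 0 1 p.1).toNNReal
          * (gaussianPDFReal 0 1 p.2).toNNReal : ℝ≥0) : ℝ≥0∞) := by
    funext p
    rw [ENNReal.coe_mul]
    rfl
  have hmeasnn : Measurable (fun p : ℝ × ℝ => (gaussianPDFReal 0 1 p.1).toNNReal
      * (gaussianPDFReal 0 1 p.2).toNNReal) :=
    (((measurable_gaussianPDFReal 0 1).comp measurable_fst).real_toNNReal).mul
      (((measurable_gaussianPDFReal 0 1).comp measurable_snd).real_toNNReal)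
  have e2 : ∫ p, F p ∂((gaussianReal 0 1).prod (gaussianReal 0 1))
      = ∫ p : ℝ × ℝ, (gaussianPDFReal 0 1 p.1 * gaussianPDFReal 0 1 p.2) * F p := by
    rw [epabn_gauss_prod, hcast, ← Measure.volume_eq_prod,
      integral_withDensity_eq_integral_smul hmeasnn F]
    refine integral_congr_ae (Filter.Eventually.of_forall fun p => ?_)
    show ((gaussianPDFReal 0 1 p.1).toNNReal * (gaussianPDFReal 0 1 p.2).toNNReal) • F p
      = (gaussianPDFReal 0 1 p.1 * gaussianPDFReal 0 1 p.2) * F p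
    rw [NNReal.smul_def]
    push_cast
    rw [Real.coe_toNNReal _ (hpdf_nn p.1), Real.coe_toNNReal _ (hpdf_nn p.2)]
    rw [smul_eq_mul]
  set G : ℝ × ℝ → ℝ :=
    fun p => (gaussianPDFReal 0 1 p.1 * gaussianPDFReal 0 1 p.2) * F p with hGdef
  -- polar coordinates
  have e3 : ∫ p : ℝ × ℝ, G p
      = ∫ p in polarCoord.target, p.1 • G (polarCoord.symm p) :=
    (integral_comp_polarCoord_symm G).symm
  have hpdf_eval : ∀ x : ℝ, gaussianPDFReal 0 1 x
      = (Real.sqrt (2 * Real.pi))⁻¹ * Real.exp (-(x ^ 2) / 2) := by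
    intro x
    rw [gaussianPDFReal]
    norm_num
  have e4 : ∫ p in polarCoord.target, p.1 • G (polarCoord.symm p)
      = ∫ p in polarCoord.target,
          (p.1 ^ 3 * Real.exp (-(p.1 ^ 2) / 2))
            * ((2 * Real.pi)⁻¹ * (|Real.cos p.2| * |ρ * Real.cos p.2 + s * Real.sin p.2|)) := by
    refine setIntegral_congr_fun polarCoord.open_target.measurableSet fun p hp => ?_
    have hr : 0 < p.1 := hp.1
    rw [epabn_polar_symm, hGdef]
    simp only [hFdef]
    have hexp : Real.exp (-((p.1 * Real.cos p.2) ^ 2) / 2)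
        * Real.exp (-((p.1 * Real.sin p.2) ^ 2) / 2) = Real.exp (-(p.1 ^ 2) / 2) := by
      rw [← Real.exp_add]
      congr 1
      have h := Real.sin_sq_add_cos_sq p.2
      linear_combination (-(p.1 ^ 2) / 2) * h
    have hsqrt : (Real.sqrt (2 * Real.pi))⁻¹ * (Real.sqrt (2 * Real.pi))⁻¹
        = (2 * Real.pi)⁻¹ := by
      rw [← mul_inv, Real.mul_self_sqrt (by positivity)]
    have habs1 : |p.1 * Real.cos p.2| = p.1 * |Real.cos p.2| := by
      rw [abs_mul, abs_of_pos hr]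
    have habs2 : |ρ * (p.1 * Real.cos p.2) + s * (p.1 * Real.sin p.2)|
        = p.1 * |ρ * Real.cos p.2 + s * Real.sin p.2| := by
      rw [show ρ * (p.1 * Real.cos p.2) + s * (p.1 * Real.sin p.2)
          = p.1 * (ρ * Real.cos p.2 + s * Real.sin p.2) by ring, abs_mul, abs_of_pos hr]
    rw [smul_eq_mul, hpdf_eval, hpdf_eval, habs1, habs2]
    rw [show ((Real.sqrt (2 * Real.pi))⁻¹ * Real.exp (-((p.1 * Real.cos p.2) ^ 2) / 2))
          * ((Real.sqrt (2 * Real.pi))⁻¹ * Real.exp (-((p.1 * Real.sin p.2) ^ 2) / 2))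
        = ((Real.sqrt (2 * Real.pi))⁻¹ * (Real.sqrt (2 * Real.pi))⁻¹)
          * (Real.exp (-((p.1 * Real.cos p.2) ^ 2) / 2)
            * Real.exp (-((p.1 * Real.sin p.2) ^ 2) / 2)) by ring, hsqrt, hexp]
    ring
  have htarget : polarCoord.target = Set.Ioi (0:ℝ) ×ˢ Set.Ioo (-Real.pi) Real.pi := rfl
  have e5 : ∫ p in polarCoord.target,
        (p.1 ^ 3 * Real.exp (-(p.1 ^ 2) / 2))
          * ((2 * Real.pi)⁻¹ * (|Real.cos p.2| * |ρ * Real.cos p.2 + s * Real.sin p.2|))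
      = (∫ r in Set.Ioi (0:ℝ), r ^ 3 * Real.exp (-(r ^ 2) / 2))
        * ∫ θ in Set.Ioo (-Real.pi) Real.pi,
            (2 * Real.pi)⁻¹ * (|Real.cos θ| * |ρ * Real.cos θ + s * Real.sin θ|) := by
    rw [htarget, Measure.volume_eq_prod]
    exact setIntegral_prod_mul (fun r => r ^ 3 * Real.exp (-(r ^ 2) / 2))
      (fun θ => (2 * Real.pi)⁻¹ * (|Real.cos θ| * |ρ * Real.cos θ + s * Real.sin θ|))
      (Set.Ioi 0) (Set.Ioo (-Real.pi) Real.pi)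
  have e6 : ∫ θ in Set.Ioo (-Real.pi) Real.pi,
        (2 * Real.pi)⁻¹ * (|Real.cos θ| * |ρ * Real.cos θ + s * Real.sin θ|)
      = (2 * Real.pi)⁻¹
        * ∫ θ in (-Real.pi)..Real.pi, |Real.cos θ| * |ρ * Real.cos θ + s * Real.sin θ| := by
    rw [intervalIntegral.integral_of_le (by linarith), ← integral_Ioc_eq_integral_Ioo,
      ← integral_const_mul]
  calc ∫ ω, |Y₁ ω| * |Y₂ ω| ∂P
      = ∫ ω, F (Z₁ ω, Z₂ ω) ∂P := e0
    _ = ∫ p, F p ∂((gaussianReal 0 1).prod (gaussianReal 0 1)) := e1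
    _ = ∫ p : ℝ × ℝ, (gaussianPDFReal 0 1 p.1 * gaussianPDFReal 0 1 p.2) * F p := e2
    _ = ∫ p in polarCoord.target, p.1 • G (polarCoord.symm p) := e3
    _ = ∫ p in polarCoord.target,
          (p.1 ^ 3 * Real.exp (-(p.1 ^ 2) / 2))
            * ((2 * Real.pi)⁻¹ * (|Real.cos p.2| * |ρ * Real.cos p.2 + s * Real.sin p.2|)) := e4
    _ = (∫ r in Set.Ioi (0:ℝ), r ^ 3 * Real.exp (-(r ^ 2) / 2))
        * ∫ θ in Set.Ioo (-Real.pi) Real.pi,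
            (2 * Real.pi)⁻¹ * (|Real.cos θ| * |ρ * Real.cos θ + s * Real.sin θ|) := e5
    _ = 2 * ((2 * Real.pi)⁻¹ * (2 * (s + ρ * Real.arcsin ρ))) := by
        rw [e6, epabn_L1, hsdef, epabn_T_int ρ hρ]
    _ = 2 / Real.pi * (s + ρ * Real.arcsin ρ) := by
        field_simp
end
end

section
/- For every m ≥ 1, the determinant of the m×m matrix Σ^(m) equals 2^{−m(m+3)/2}. -/
open scoped NNReal Topology

noncomputable section

private lemma aux_geom (n : ℕ) :
    ∑ i ∈ Finset.range n, ((2:ℝ)⁻¹) ^ (i + 1) = 1 - ((2:ℝ)⁻¹) ^ n := by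
  induction n with
  | zero => simp
  | succ k ih => rw [Finset.sum_range_succ, ih]; ring

private lemma aux_gauss (n : ℕ) :
    ∑ i ∈ Finset.range n, ((i : ℝ) + 1) = (n : ℝ) * ((n : ℝ) + 1) / 2 := by
  induction n with
  | zero => simp
  | succ k ih => rw [Finset.sum_range_succ, ih]; push_cast; ring

/-- The determinant of the covariance matrix `Σ⁽ᵐ⁾` with entries (for `j, l ∈ {1,…,m}`,
represented by `Fin m` via `j ↦ j+1`) `Σ_{jl} = −2^{−(j+l)}` for `j ≠ l` and
`Σ_{ll} = 2^{−l} − 2^{−2l}` equals `2^{−m(m+3)/2}`. -/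
theorem det_covariance_matrix (m : ℕ) (hm : 1 ≤ m)
    (S : Matrix (Fin m) (Fin m) ℝ)
    (hS : ∀ j l : Fin m, S j l =
      if j = l then (2 : ℝ) ^ (-((l : ℝ) + 1)) - (2 : ℝ) ^ (-2 * ((l : ℝ) + 1))
      else -(2 : ℝ) ^ (-(((j : ℝ) + 1) + ((l : ℝ) + 1)))) :
    S.det = (2 : ℝ) ^ (-((m : ℝ) * ((m : ℝ) + 3)) / 2) := by
  classical
  have h2 : (0:ℝ) < 2 := by norm_num
  set w : Fin m → ℝ := fun l => (2 : ℝ) ^ (-((l : ℝ) + 1)) with hw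
  have hSeq : S = Matrix.diagonal w *
      (1 + Matrix.replicateCol Unit (fun _ => (-1 : ℝ)) * Matrix.replicateRow Unit w) := by
    ext j l
    rw [hS]
    simp only [Matrix.mul_apply, Matrix.diagonal_apply, Matrix.add_apply,
      Matrix.one_apply, Matrix.replicateCol_apply, Matrix.replicateRow_apply, Fintype.sum_unique]
    rw [Finset.sum_eq_single j (fun x _ hx => by simp [Ne.symm hx]) (by simp)]
    simp only [if_pos rfl, hw, if_true, ite_true]
    by_cases h : j = l
    · subst h
      have e : (2:ℝ) ^ (-2 * ((j:ℝ)+1))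
          = (2:ℝ) ^ (-((j:ℝ)+1)) * (2:ℝ) ^ (-((j:ℝ)+1)) := by
        rw [← Real.rpow_add h2]; congr 1; ring
      simp only [if_pos rfl, e, if_true, ite_true]
      ring
    · have e : (2:ℝ) ^ (-(((j:ℝ)+1)+((l:ℝ)+1)))
          = (2:ℝ) ^ (-((j:ℝ)+1)) * (2:ℝ) ^ (-((l:ℝ)+1)) := by
        rw [← Real.rpow_add h2]; congr 1; ring
      simp only [if_neg h, e, if_true, ite_true]
      ring
  have hdet : S.det = (∏ l, w l) * (1 + dotProduct w (fun _ => (-1 : ℝ))) := by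
    rw [hSeq, Matrix.det_mul, Matrix.det_diagonal, Matrix.det_one_add_replicateCol_mul_replicateRow]
  have hwpow : ∀ l : Fin m, w l = ((2:ℝ)⁻¹) ^ ((l : ℕ) + 1) := by
    intro l
    simp only [hw]
    rw [show (-((l:ℝ)+1)) = -(((l:ℕ)+1 : ℕ) : ℝ) by push_cast; ring,
      Real.rpow_neg (by norm_num), Real.rpow_natCast, ← inv_pow]
  have hsum : ∑ l, w l = 1 - ((2:ℝ)⁻¹) ^ m := by
    simp only [hwpow]
    rw [Fin.sum_univ_eq_sum_range (fun l => ((2:ℝ)⁻¹) ^ (l + 1))]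
    exact aux_geom m
  have hdot : 1 + dotProduct w (fun _ => (-1 : ℝ)) = (2:ℝ) ^ (-(m:ℝ)) := by
    simp only [dotProduct, mul_neg_one, Finset.sum_neg_distrib, hsum]
    rw [Real.rpow_neg (by norm_num), Real.rpow_natCast, ← inv_pow]
    ring
  have hprod : ∏ l, w l = (2:ℝ) ^ (-((m:ℝ) * ((m:ℝ) + 1)) / 2) := by
    have h1 : ∏ l, w l = (2:ℝ) ^ (∑ l : Fin m, -((l:ℝ) + 1)) := by
      simp only [hw, Real.rpow_def_of_pos h2, ← Real.exp_sum, Finset.mul_sum]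
    rw [h1]
    congr 1
    rw [Finset.sum_neg_distrib, Fin.sum_univ_eq_sum_range (fun l => ((l:ℝ) + 1)),
      aux_gauss m]
    ring
  rw [hdet, hdot, hprod, ← Real.rpow_add h2]
  congr 1
  ring
end
end

section
/- For every m ≥ 1, the lower-triangular matrix L^(m) is invertible and its inverse is given entrywise by ((L^(m))^{−1})_{lj} = 2^{(l−1)/2} for l > j, ((L^(m))^{−1})_{ll} = 2^{(l+1)/2}, and ((L^(m))^{−1})_{lj} = 0 for l < j. -/
open scoped NNReal Topology
open Finset

noncomputable section

/-- The lower-triangular matrix `L⁽ᵐ⁾` (rows `l`, columns `j` in `{1,…,m}`, represented by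
`Fin m` via `l ↦ l+1`) with `L_{lj} = −2^{−(j+1)/2−(l−j)}` for `j < l`,
`L_{ll} = 2^{−(l+1)/2}` and `L_{lj} = 0` for `j > l`, is invertible with inverse given by
`(L⁻¹)_{lj} = 2^{(l−1)/2}` for `l > j`, `(L⁻¹)_{ll} = 2^{(l+1)/2}` and `(L⁻¹)_{lj} = 0`
for `l < j`. -/
theorem L_matrix_inverse (m : ℕ) (hm : 1 ≤ m)
    (L Linv : Matrix (Fin m) (Fin m) ℝ)
    (hL : ∀ l j : Fin m, L l j =
      if (j : ℕ) < (l : ℕ) then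
        -(2 : ℝ) ^ (-(((j : ℝ) + 1) + 1) / 2 - ((l : ℝ) - (j : ℝ)))
      else if j = l then (2 : ℝ) ^ (-(((l : ℝ) + 1) + 1) / 2)
      else 0)
    (hLinv : ∀ l j : Fin m, Linv l j =
      if (j : ℕ) < (l : ℕ) then (2 : ℝ) ^ (((l : ℝ) + 1 - 1) / 2)
      else if j = l then (2 : ℝ) ^ (((l : ℝ) + 1 + 1) / 2)
      else 0) :
    IsUnit L ∧ L⁻¹ = Linv := by
  have key : L * Linv = 1 := by
    ext l k
    rw [Matrix.mul_apply, Matrix.one_apply]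
    set g : ℕ → ℝ := fun j =>
      (if j < (l : ℕ) then
          -(2 : ℝ) ^ (-(((j : ℝ) + 1) + 1) / 2 - ((l : ℝ) - (j : ℝ)))
        else if j = (l : ℕ) then (2 : ℝ) ^ (-(((l : ℝ) + 1) + 1) / 2)
        else 0) *
      (if (k : ℕ) < j then (2 : ℝ) ^ (((j : ℝ) + 1 - 1) / 2)
        else if (k : ℕ) = j then (2 : ℝ) ^ (((j : ℝ) + 1 + 1) / 2)
        else 0) with hgdef
    have hterm : ∀ j : Fin m, L l j * Linv j k = g (j : ℕ) := by
      intro j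
      rw [hL, hLinv, hgdef]
      simp only [Fin.ext_iff]
    rw [Finset.sum_congr rfl fun j _ => hterm j, Fin.sum_univ_eq_sum_range g m]
    have hlm : (l : ℕ) + 1 ≤ m := l.isLt
    have hzero : ∀ j ∈ range m, j ∉ range ((l : ℕ) + 1) → g j = 0 := by
      intro j _ hj
      rw [mem_range, not_lt] at hj
      have h1 : ¬ j < (l : ℕ) := by omega
      have h2 : j ≠ (l : ℕ) := by omega
      simp [hgdef, h1, h2]
    rw [← Finset.sum_subset (Finset.range_subset_range.2 hlm) hzero]
    rcases lt_trichotomy (k : ℕ) (l : ℕ) with hkl | hkl | hkl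
    · -- k < l : sum is 0
      have hne : l ≠ k := by simp [Fin.ext_iff]; omega
      rw [if_neg hne]
      set a : ℝ := (2 : ℝ) ^ (-(l : ℝ)) with hadef
      have ha : (2 : ℝ) ^ (l : ℕ) * a = 1 := by
        rw [hadef, ← Real.rpow_natCast 2 (l : ℕ), ← Real.rpow_add (by norm_num)]
        simp
      have hgl : g (l : ℕ) = 2⁻¹ := by
        simp only [hgdef, hkl, lt_self_iff_false, eq_self_iff_true, if_true, if_false,
          ite_true, ite_false]
        rw [← Real.rpow_add (by norm_num)]
        rw [show -(((l : ℝ) + 1) + 1) / 2 + (((l : ℝ) + 1 - 1) / 2) = -1 by ring]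
        rw [show (-1 : ℝ) = ((-1 : ℤ) : ℝ) by norm_num, Real.rpow_intCast]
        norm_num
      have hgk : g (k : ℕ) = -((2 : ℝ) ^ (k : ℕ) * a) := by
        simp only [hgdef, hkl, lt_self_iff_false, eq_self_iff_true, if_true, if_false,
          ite_true, ite_false]
        rw [neg_mul,
          ← Real.rpow_add (by norm_num), hadef,
          ← Real.rpow_natCast 2 (k : ℕ), ← Real.rpow_add (by norm_num)]
        ring_nf
      have hgj : ∀ j ∈ Ico ((k : ℕ) + 1) (l : ℕ),
          g j = -((2 : ℝ) ^ j * (a * 2⁻¹)) := by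
        intro j hj
        rw [mem_Ico] at hj
        have h1 : j < (l : ℕ) := hj.2
        have h2 : (k : ℕ) < j := by omega
        simp only [hgdef, h1, h2, if_true, ite_true]
        rw [neg_mul,
          ← Real.rpow_add (by norm_num), hadef,
          ← Real.rpow_natCast 2 j,
          show (2 : ℝ)⁻¹ = (2 : ℝ) ^ (-1 : ℝ) by
            rw [show (-1 : ℝ) = ((-1 : ℤ) : ℝ) by norm_num, Real.rpow_intCast]; norm_num,
          ← Real.rpow_add (by norm_num), ← Real.rpow_add (by norm_num)]
        ring_nf
      have hk1l : (k : ℕ) + 1 ≤ (l : ℕ) := hkl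
      rw [Finset.sum_range_succ, Finset.range_eq_Ico,
        ← Finset.sum_Ico_consecutive g (Nat.zero_le ((k : ℕ) + 1)) hk1l,
        ← Finset.range_eq_Ico, Finset.sum_range_succ]
      have hz : ∑ j ∈ range (k : ℕ), g j = 0 := by
        apply Finset.sum_eq_zero
        intro j hj
        rw [mem_range] at hj
        have h1 : ¬ (k : ℕ) < j := by omega
        have h2 : (k : ℕ) ≠ j := by omega
        simp [hgdef, h1, h2]
      rw [hz, Finset.sum_congr rfl hgj, hgk, hgl, zero_add]
      have hsum : ∑ j ∈ Ico ((k : ℕ) + 1) (l : ℕ), -((2 : ℝ) ^ j * (a * 2⁻¹)) =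
          -(((2 : ℝ) ^ (l : ℕ) - 2 ^ ((k : ℕ) + 1)) / (2 - 1) * (a * 2⁻¹)) := by
        rw [Finset.sum_neg_distrib, ← Finset.sum_mul,
          geom_sum_Ico (by norm_num) hk1l]
      rw [hsum]
      have h2k1 : (2 : ℝ) ^ ((k : ℕ) + 1) = 2 * 2 ^ (k : ℕ) := by ring
      rw [h2k1]
      linear_combination (-(2 : ℝ)⁻¹) * ha
    · -- k = l : sum is 1
      have heq : l = k := by simp [Fin.ext_iff]; omega
      rw [if_pos heq]
      rw [Finset.sum_range_succ]
      have hz : ∑ j ∈ range (l : ℕ), g j = 0 := by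
        apply Finset.sum_eq_zero
        intro j hj
        rw [mem_range] at hj
        have h1 : ¬ (k : ℕ) < j := by omega
        have h2 : (k : ℕ) ≠ j := by omega
        simp [hgdef, h1, h2]
      have hgl : g (l : ℕ) = 1 := by
        simp only [hgdef, hkl, lt_self_iff_false, eq_self_iff_true, if_true, if_false,
          ite_true, ite_false]
        rw [← Real.rpow_add (by norm_num)]
        rw [show -(((l : ℝ) + 1) + 1) / 2 + (((l : ℝ) + 1 + 1) / 2) = 0 by ring]
        exact Real.rpow_zero 2
      rw [hz, hgl, zero_add]
    · -- l < k : sum is 0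
      have hne : l ≠ k := by simp [Fin.ext_iff]; omega
      rw [if_neg hne]
      apply Finset.sum_eq_zero
      intro j hj
      rw [mem_range] at hj
      have h1 : ¬ (k : ℕ) < j := by omega
      have h2 : (k : ℕ) ≠ j := by omega
      simp [hgdef, h1, h2]
  refine ⟨?_, Matrix.inv_eq_right_inv key⟩
  rw [Matrix.isUnit_iff_isUnit_det]
  exact IsUnit.of_mul_eq_one _ (by rw [← Matrix.det_mul, key, Matrix.det_one])
end
end

section
/- For every real k, if Z is a standard normal random variable then E[ exp(i k Z) · 1_{Z ≥ 0} ] = (1/2) e^{−k²/2} + i · ( e^{−k²/2} / (2 √(2π)) ) · ∫_{−k}^{k} e^{x²/2} dx. -/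
open MeasureTheory ProbabilityTheory
open scoped NNReal Topology

noncomputable section

open Set Filter Complex
open scoped ENNReal

/-- The main auxiliary function: `H k = ∫_0^∞ exp(ikx) exp(-x²/2) dx`. -/
noncomputable def Hgauss (k : ℝ) : ℂ :=
  ∫ x in Ioi (0:ℝ), Complex.exp (Complex.I * k * x) * (Real.exp (-x^2/2) : ℂ)

lemma integrable_rexp_half : Integrable (fun x : ℝ => Real.exp (-x^2/2)) := by
  have := integrable_exp_neg_mul_sq (by norm_num : (0:ℝ) < 1/2)
  convert this using 2 with x
  ring_nf

lemma cont_aux (k : ℝ) : Continuous (fun x : ℝ => Complex.exp (Complex.I * k * x)) :=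
  Complex.continuous_exp.comp (by fun_prop)

lemma abs_aux (k x : ℝ) : ‖Complex.exp (Complex.I * k * x)‖ = 1 := by
  rw [Complex.norm_exp]; simp [Complex.mul_re]

lemma integrable_Hgauss (k : ℝ) :
    Integrable (fun x : ℝ => Complex.exp (Complex.I * k * x) * (Real.exp (-x^2/2) : ℂ)) := by
  have hg : Integrable (fun x : ℝ => (Real.exp (-x^2/2) : ℂ)) := integrable_rexp_half.ofReal
  exact hg.bdd_mul (cont_aux k).aestronglyMeasurable
    (c := 1) (Filter.Eventually.of_forall fun x => (abs_aux k x).le)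

lemma integrable_x_rexp_half : Integrable (fun x : ℝ => x * Real.exp (-x^2/2)) := by
  have := integrable_mul_exp_neg_mul_sq (by norm_num : (0:ℝ) < 1/2)
  convert this using 2 with x
  ring_nf

lemma integrable_x_Hgauss (k : ℝ) :
    Integrable (fun x : ℝ => (x:ℂ) * Complex.exp (Complex.I * k * x)
      * (Real.exp (-x^2/2) : ℂ)) := by
  have hg : Integrable (fun x : ℝ => ((x * Real.exp (-x^2/2) : ℝ) : ℂ)) :=
    integrable_x_rexp_half.ofReal
  have := hg.bdd_mul (f := fun x : ℝ => Complex.exp (Complex.I * k * x))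
    (cont_aux k).aestronglyMeasurable
    (c := 1) (Filter.Eventually.of_forall fun x => (abs_aux k x).le)
  convert this using 2 with x
  push_cast
  ring

lemma hasDerivAt_prim (k x : ℝ) :
    HasDerivAt (fun x : ℝ => -Complex.exp (Complex.I * k * x) * (Real.exp (-x^2/2) : ℂ))
      ((x:ℂ) * Complex.exp (Complex.I * k * x) * (Real.exp (-x^2/2) : ℂ)
        - Complex.I * k * (Complex.exp (Complex.I * k * x) * (Real.exp (-x^2/2) : ℂ))) x := by
  have h1 : HasDerivAt (fun x : ℝ => Complex.exp (Complex.I * k * x))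
      (Complex.I * k * Complex.exp (Complex.I * k * x)) x := by
    have : HasDerivAt (fun z : ℂ => Complex.exp (Complex.I * k * z))
        (Complex.I * k * Complex.exp (Complex.I * k * x)) (x:ℂ) := by
      simpa [mul_comm] using ((hasDerivAt_id (x:ℂ)).const_mul (Complex.I * k)).cexp
    exact this.comp_ofReal
  have h2 : HasDerivAt (fun x : ℝ => (Real.exp (-x^2/2) : ℂ))
      ((-x * Real.exp (-x^2/2) : ℝ) : ℂ) x := by
    apply HasDerivAt.ofReal_comp
    have h : HasDerivAt (fun x : ℝ => -x^2/2) (-x) x := by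
      have := ((hasDerivAt_pow 2 x).neg.div_const 2)
      exact this.congr_deriv (by rw [show (2:ℕ) - 1 = 1 from rfl]; push_cast; ring)
    have := h.exp
    convert this using 1
    ring
  have := (h1.neg.mul h2)
  exact this.congr_deriv (by simp only [Pi.neg_apply]; push_cast; ring)

lemma tendsto_prim (k : ℝ) :
    Tendsto (fun x : ℝ => -Complex.exp (Complex.I * k * x) * (Real.exp (-x^2/2) : ℂ))
      atTop (𝓝 0) := by
  rw [tendsto_zero_iff_norm_tendsto_zero]
  have : (fun x : ℝ => ‖-Complex.exp (Complex.I * k * x) * (Real.exp (-x^2/2) : ℂ)‖)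
      = fun x : ℝ => Real.exp (-x^2/2) := by
    ext x
    rw [norm_mul, norm_neg, abs_aux, one_mul, Complex.norm_real,
      Real.norm_of_nonneg (Real.exp_nonneg _)]
  rw [this]
  apply Real.tendsto_exp_atBot.comp
  have h2 : Tendsto (fun x : ℝ => x^2/2) atTop atTop :=
    (tendsto_pow_atTop two_ne_zero).atTop_div_const (by norm_num)
  have := tendsto_neg_atTop_atBot.comp h2
  convert this using 2 with x
  simp [Function.comp]; ring

lemma parts_Hgauss (k : ℝ) :
    ∫ x in Ioi (0:ℝ), (x:ℂ) * Complex.exp (Complex.I * k * x) * (Real.exp (-x^2/2) : ℂ)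
      = 1 + Complex.I * k * Hgauss k := by
  have hint : IntegrableOn (fun x : ℝ =>
      (x:ℂ) * Complex.exp (Complex.I * k * x) * (Real.exp (-x^2/2) : ℂ)
        - Complex.I * k * (Complex.exp (Complex.I * k * x) * (Real.exp (-x^2/2) : ℂ)))
      (Ioi 0) := by
    exact ((integrable_x_Hgauss k).sub ((integrable_Hgauss k).const_mul _)).integrableOn
  have key := integral_Ioi_of_hasDerivAt_of_tendsto' (fun x _ => hasDerivAt_prim k x)
    hint (tendsto_prim k)
  rw [integral_sub ((integrable_x_Hgauss k).integrableOn)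
    (((integrable_Hgauss k).const_mul _).integrableOn)] at key
  rw [integral_const_mul] at key
  simp only [Complex.ofReal_zero, mul_zero, Complex.exp_zero] at key
  rw [show (∫ x in Ioi (0:ℝ), Complex.exp (Complex.I * k * x) * (Real.exp (-x^2/2) : ℂ)) = Hgauss k from rfl] at key
  push_cast at key ⊢
  norm_num at key
  linear_combination key

lemma Hgauss_zero : Hgauss 0 = ((Real.sqrt (2 * Real.pi) / 2 : ℝ) : ℂ) := by
  unfold Hgauss
  simp only [Complex.ofReal_zero, mul_zero, zero_mul, Complex.exp_zero, one_mul]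
  have hI : (∫ x in Ioi (0:ℝ), (Real.exp (-x^2/2) : ℂ))
      = ((∫ x in Ioi (0:ℝ), Real.exp (-x^2/2) : ℝ) : ℂ) := integral_ofReal
  rw [hI]
  norm_cast
  have h2 : ∀ x : ℝ, Real.exp (-x^2/2) = Real.exp (-(1/2) * x^2) := fun x => by ring_nf
  simp_rw [h2]
  rw [integral_gaussian_Ioi, show Real.pi / (1/2) = 2 * Real.pi by ring]

lemma hasDerivAt_cexp_aux (x t : ℝ) :
    HasDerivAt (fun t : ℝ => Complex.exp (Complex.I * t * x))
      (Complex.I * x * Complex.exp (Complex.I * t * x)) t := by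
  have h : HasDerivAt (fun z : ℂ => Complex.exp (Complex.I * z * x))
      (Complex.I * x * Complex.exp (Complex.I * t * x)) (t:ℂ) := by
    have h0 : HasDerivAt (fun z : ℂ => Complex.I * z * x) (Complex.I * x) (t:ℂ) := by
      simpa using (((hasDerivAt_id (t:ℂ)).const_mul Complex.I).mul_const (x:ℂ))
    simpa [mul_comm] using h0.cexp
  exact h.comp_ofReal

lemma hasDerivAt_Hgauss (k : ℝ) :
    HasDerivAt Hgauss (Complex.I - k * Hgauss k) k := by
  have main := hasDerivAt_integral_of_dominated_loc_of_deriv_le (Metric.ball_mem_nhds k (by norm_num : (0:ℝ) < 1))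
    (F := fun (t : ℝ) (x : ℝ) => Complex.exp (Complex.I * t * x) * (Real.exp (-x^2/2) : ℂ))
    (F' := fun (t : ℝ) (x : ℝ) => Complex.I * x * Complex.exp (Complex.I * t * x) * (Real.exp (-x^2/2) : ℂ))
    (μ := MeasureTheory.volume.restrict (Ioi (0:ℝ)))
    (bound := fun x => |x| * Real.exp (-x^2/2))
    (Filter.Eventually.of_forall fun t =>
      ((cont_aux t).mul (Complex.continuous_ofReal.comp (by fun_prop))).aestronglyMeasurable)
    (integrable_Hgauss k).integrableOn
    (((continuous_const.mul Complex.continuous_ofReal).mul (cont_aux k) |>.mul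
      (Complex.continuous_ofReal.comp (by fun_prop))).aestronglyMeasurable)
    (Filter.Eventually.of_forall fun x t _ => by
      rw [norm_mul, norm_mul, norm_mul, abs_aux,
        Complex.norm_I, one_mul, mul_one,
        Complex.norm_real, Complex.norm_real, Real.norm_of_nonneg (Real.exp_nonneg _),
        Real.norm_eq_abs])
    (integrable_x_rexp_half.abs.congr (Filter.Eventually.of_forall fun x => by
      simp only [abs_mul, _root_.abs_of_nonneg (Real.exp_nonneg _)])).integrableOn
    (Filter.Eventually.of_forall fun x t _ => (hasDerivAt_cexp_aux x t).mul_const _)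
  obtain ⟨-, hd⟩ := main
  have : (∫ x in Ioi (0:ℝ),
      Complex.I * x * Complex.exp (Complex.I * k * x) * (Real.exp (-x^2/2) : ℂ))
      = Complex.I - k * Hgauss k := by
    have : (fun x : ℝ => Complex.I * x * Complex.exp (Complex.I * k * x) * (Real.exp (-x^2/2) : ℂ))
        = fun x : ℝ => Complex.I * ((x:ℂ) * Complex.exp (Complex.I * k * x) * (Real.exp (-x^2/2) : ℂ)) := by
      ext x; ring
    rw [this, integral_const_mul, parts_Hgauss k]
    have hI := Complex.I_sq
    linear_combination (k : ℂ) * Hgauss k * hI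
  rw [this] at hd
  exact hd

lemma hasDerivAt_interval (t : ℝ) :
    HasDerivAt (fun t : ℝ => ∫ s in (0:ℝ)..t, Real.exp (s^2/2)) (Real.exp (t^2/2)) t := by
  have hc : Continuous (fun s : ℝ => Real.exp (s^2/2)) := by fun_prop
  exact (intervalIntegral.integral_hasStrictDerivAt_right
    (hc.intervalIntegrable _ _) (hc.stronglyMeasurableAtFilter _ _) hc.continuousAt).hasDerivAt

lemma Hgauss_eq (k : ℝ) :
    Hgauss k = ((Real.exp (-k^2/2) : ℝ) : ℂ) *
      (((Real.sqrt (2 * Real.pi) / 2 : ℝ) : ℂ)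
        + Complex.I * ((∫ t in (0:ℝ)..k, Real.exp (t^2/2) : ℝ) : ℂ)) := by
  set G : ℝ → ℂ := fun t => ((Real.exp (t^2/2) : ℝ) : ℂ) * Hgauss t
    - Complex.I * ((∫ s in (0:ℝ)..t, Real.exp (s^2/2) : ℝ) : ℂ) with hG
  have hexp : ∀ t : ℝ, HasDerivAt (fun t : ℝ => ((Real.exp (t^2/2) : ℝ) : ℂ))
      ((t * Real.exp (t^2/2) : ℝ) : ℂ) t := by
    intro t
    apply HasDerivAt.ofReal_comp
    have h : HasDerivAt (fun t : ℝ => t^2/2) t t := by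
      simpa using (hasDerivAt_pow 2 t).div_const 2
    simpa [mul_comm] using h.exp
  have hGd : ∀ t : ℝ, HasDerivAt G 0 t := by
    intro t
    have h1 := (hexp t).mul (hasDerivAt_Hgauss t)
    have h2 := ((hasDerivAt_interval t).ofReal_comp).const_mul Complex.I
    have := h1.sub h2
    exact this.congr_deriv (by push_cast; ring)
  have hconst : G k = G 0 := by
    have := is_const_of_deriv_eq_zero (fun t => (hGd t).differentiableAt)
      (fun t => (hGd t).deriv) k 0
    exact this
  rw [hG] at hconst
  simp only [intervalIntegral.integral_same, Complex.ofReal_zero, mul_zero, sub_zero] at hconst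
  rw [Hgauss_zero, show ((0:ℝ)^2/2) = 0 by norm_num, Real.exp_zero, Complex.ofReal_one,
    one_mul] at hconst
  have hne : ((Real.exp (k^2/2) : ℝ) : ℂ) ≠ 0 := by
    exact_mod_cast Real.exp_ne_zero _
  have hinv : ((Real.exp (-k^2/2) : ℝ) : ℂ) * ((Real.exp (k^2/2) : ℝ) : ℂ) = 1 := by
    rw [← Complex.ofReal_mul, ← Real.exp_add, show (-k^2/2 + k^2/2 : ℝ) = 0 by ring,
      Real.exp_zero, Complex.ofReal_one]
  linear_combination ((Real.exp (-k^2/2) : ℝ) : ℂ) * hconst - Hgauss k * hinv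

lemma interval_even (k : ℝ) :
    (∫ x in (-k)..k, Real.exp (x^2/2)) = 2 * ∫ t in (0:ℝ)..k, Real.exp (t^2/2) := by
  have hc : Continuous (fun s : ℝ => Real.exp (s^2/2)) := by fun_prop
  have h1 := intervalIntegral.integral_comp_neg (a := (0:ℝ)) (b := k)
    (fun x => Real.exp (x^2/2))
  simp only [neg_sq, neg_zero] at h1
  have h2 := intervalIntegral.integral_add_adjacent_intervals (μ := MeasureTheory.volume)
    (hc.intervalIntegrable (-k) 0) (hc.intervalIntegrable 0 k)
  rw [← h2, ← h1]
  ring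

/-- For a standard normal `Z` and real `k`,
`E[exp(ikZ)·1_{Z≥0}] = (1/2)e^{−k²/2} + i (e^{−k²/2}/(2√(2π))) ∫_{−k}^{k} e^{x²/2} dx`. -/
theorem fourier_transform_positive_part_gaussian
    {Ω : Type*} [MeasurableSpace Ω] (P : Measure Ω) [IsProbabilityMeasure P]
    (k : ℝ) (Z : Ω → ℝ) (hZ : Measure.map Z P = gaussianReal 0 1) :
    ∫ ω, Set.indicator {ω | 0 ≤ Z ω}
        (fun ω => Complex.exp (Complex.I * (k : ℂ) * (Z ω : ℂ))) ω ∂P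
      = (1 / 2) * Complex.exp (-(k : ℂ) ^ 2 / 2)
        + Complex.I * ((Real.exp (-k ^ 2 / 2) / (2 * Real.sqrt (2 * Real.pi)) : ℝ) : ℂ)
          * ((∫ x in (-k)..k, Real.exp (x ^ 2 / 2) : ℝ) : ℂ) := by
  have hZae : AEMeasurable Z P := by
    by_contra h
    rw [Measure.map_of_not_aemeasurable h] at hZ
    exact (IsProbabilityMeasure.ne_zero (gaussianReal 0 1)) hZ.symm
  set g : ℝ → ℂ := fun x => Complex.exp (Complex.I * k * x) with hg
  have hind : ∀ ω, Set.indicator {ω | 0 ≤ Z ω}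
      (fun ω => Complex.exp (Complex.I * (k : ℂ) * (Z ω : ℂ))) ω
      = Set.indicator (Ici (0:ℝ)) g (Z ω) := by
    intro ω
    by_cases h : 0 ≤ Z ω <;>
      simp [Set.indicator_apply, h, Set.mem_Ici, Set.mem_setOf_eq, hg]
  simp_rw [hind]
  have hmg : AEStronglyMeasurable (Set.indicator (Ici (0:ℝ)) g) (Measure.map Z P) :=
    (cont_aux k).aestronglyMeasurable.indicator measurableSet_Ici
  rw [← integral_map hZae hmg, hZ]
  rw [gaussianReal_of_var_ne_zero _ one_ne_zero]
  have hpdf_meas : Measurable (fun x => (gaussianPDFReal 0 1 x).toNNReal) :=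
    (measurable_gaussianPDFReal 0 1).real_toNNReal
  rw [show gaussianPDF 0 1 = fun x => ((gaussianPDFReal 0 1 x).toNNReal : ℝ≥0∞) from rfl]
  rw [integral_withDensity_eq_integral_smul hpdf_meas]
  have hpdf : ∀ x : ℝ, ((gaussianPDFReal 0 1 x).toNNReal : ℝ)
      = (Real.sqrt (2 * Real.pi))⁻¹ * Real.exp (-x^2/2) := by
    intro x
    rw [Real.coe_toNNReal _ (gaussianPDFReal_nonneg 0 1 x)]
    simp [gaussianPDFReal]
  have hsmul : ∀ x : ℝ, ((gaussianPDFReal 0 1 x).toNNReal : ℝ≥0) • Set.indicator (Ici (0:ℝ)) g x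
      = Set.indicator (Ici (0:ℝ))
          (fun x => ((Real.sqrt (2 * Real.pi))⁻¹ * Real.exp (-x^2/2) : ℝ) • g x) x := by
    intro x
    by_cases h : x ∈ Ici (0:ℝ) <;>
      simp [Set.indicator_of_mem, Set.indicator_of_notMem, h, NNReal.smul_def, hpdf x]
  simp_rw [hsmul]
  rw [integral_indicator measurableSet_Ici, integral_Ici_eq_integral_Ioi]
  have : ∀ x : ℝ, ((Real.sqrt (2 * Real.pi))⁻¹ * Real.exp (-x^2/2) : ℝ) • g x
      = (Real.sqrt (2 * Real.pi))⁻¹ • (g x * (Real.exp (-x^2/2) : ℂ)) := by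
    intro x
    rw [Complex.real_smul, Complex.real_smul]
    push_cast
    ring
  simp_rw [this]
  rw [integral_smul, show (∫ x in Ioi (0:ℝ), g x * (Real.exp (-x^2/2) : ℂ)) = Hgauss k from rfl]
  rw [Hgauss_eq k, interval_even k]
  have hs : Real.sqrt (2 * Real.pi) ≠ 0 := by positivity
  rw [Complex.real_smul]
  have hcexp : Complex.exp (-(k:ℂ)^2/2) = ((Real.exp (-k^2/2) : ℝ) : ℂ) := by
    push_cast
    norm_num
  rw [hcexp]
  have h2C : ((Real.sqrt 2 : ℝ) : ℂ) ≠ 0 := by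
    exact_mod_cast (by positivity : Real.sqrt 2 ≠ 0)
  have hpiC : ((Real.sqrt Real.pi : ℝ) : ℂ) ≠ 0 := by
    exact_mod_cast (by positivity : Real.sqrt Real.pi ≠ 0)
  have hsC : ((Real.sqrt (2 * Real.pi) : ℝ) : ℂ) ≠ 0 := by exact_mod_cast hs
  push_cast
  field_simp
end
end
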